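/- arXiv:2509.08252 — 3 statements merged into one kernel-verified Lean document; each statement's English description precedes it below -/
import Mathlib

section
/- Let (X,d) be a compact metric space, Y a nonempty compact convex subset of ℝ^m, and S : X ⇉ Y a set-valued map with nonempty convex compact values. Let ι be the neutral belief over S and let β be the belief over S with density h, i.e. β_x(A) := (∫_{A∩S(x)} h(x,y) dλ_x(y)) / (∫_{S(x)} h(x,y) dλ_x(y)), where h is strictly positive on X × Y. If ι is Lipschitz with respect to d_W1 and h is Lipschitz on X × Y, then β is Lipschitz with respect to d_W1. -/
open Metric Set MeasureTheory
open scoped ENNReal NNReal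
set_option maxHeartbeats 1000000

/-- Affine dimension of a subset of Euclidean space. -/
noncomputable def affDim {m : ℕ} (s : Set (EuclideanSpace ℝ (Fin m))) : ℕ :=
  Module.finrank ℝ ↥(vectorSpan ℝ s)

/-- The neutral belief over `S`: the uniform distribution on `S x`, i.e. the
`dim(S x)`-dimensional Hausdorff measure restricted to `S x` and normalized. -/
noncomputable def neutralBelief {X : Type*} {m : ℕ}
    (S : X → Set (EuclideanSpace ℝ (Fin m))) (x : X) :
    Measure (EuclideanSpace ℝ (Fin m)) :=
  (μH[(affDim (S x) : ℝ)] (S x))⁻¹ • (μH[(affDim (S x) : ℝ)]).restrict (S x)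

/-- The belief over `S` with density `h`:
`β_x(A) = (∫_{A∩S(x)} h(x,y) dλ_x) / (∫_{S(x)} h(x,y) dλ_x)`. -/
noncomputable def densityBelief {X : Type*} {m : ℕ}
    (S : X → Set (EuclideanSpace ℝ (Fin m)))
    (h : X → EuclideanSpace ℝ (Fin m) → ℝ) (x : X) :
    Measure (EuclideanSpace ℝ (Fin m)) :=
  let ν : Measure (EuclideanSpace ℝ (Fin m)) :=
    ((μH[(affDim (S x) : ℝ)]).restrict (S x)).withDensity
      (fun y => ENNReal.ofReal (h x y))
  (ν Set.univ)⁻¹ • ν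

/-- The Wasserstein-1 distance between two measures, defined through 1-Lipschitz
test functions. -/
noncomputable def dW1 {m : ℕ} (μ ν : Measure (EuclideanSpace ℝ (Fin m))) : ℝ :=
  sSup {r | ∃ f : EuclideanSpace ℝ (Fin m) → ℝ, LipschitzWith 1 f ∧
    r = (∫ y, f y ∂μ) - ∫ y, f y ∂ν}

lemma hausdorff_affDim_pos_ne_top {m : ℕ} (s : Set (EuclideanSpace ℝ (Fin m)))
    (hne : s.Nonempty) (hconv : Convex ℝ s) (hcomp : IsCompact s) :
    0 < μH[(affDim s : ℝ)] s ∧ μH[(affDim s : ℝ)] s ≠ ⊤ := by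
  classical
  set d : ℕ := affDim s with hd
  set V : Submodule ℝ (EuclideanSpace ℝ (Fin m)) := vectorSpan ℝ s with hV
  obtain ⟨p, hp⟩ := hne
  have hdV : Module.finrank ℝ V = d := rfl
  let B : OrthonormalBasis (Fin d) ℝ V :=
    (stdOrthonormalBasis ℝ V).reindex (finCongr hdV)
  let φ : EuclideanSpace ℝ (Fin d) → EuclideanSpace ℝ (Fin m) :=
    fun v => p + (B.repr.symm v : EuclideanSpace ℝ (Fin m))
  have hφ : Isometry φ := by
    have h1 : Isometry fun v : EuclideanSpace ℝ (Fin d) =>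
        (B.repr.symm v : EuclideanSpace ℝ (Fin m)) :=
      isometry_subtype_coe.comp B.repr.symm.isometry
    exact (IsometryEquiv.addLeft p).isometry.comp h1
  have hrange : s ⊆ Set.range φ := by
    intro y hy
    refine ⟨B.repr ⟨y - p, ?_⟩, ?_⟩
    · exact vsub_mem_vectorSpan ℝ hy hp
    · simp [φ]
  set T : Set (EuclideanSpace ℝ (Fin d)) := φ ⁻¹' s with hT
  have himg : φ '' T = s := Set.image_preimage_eq_iff.mpr hrange
  have hmeas : μH[(d : ℝ)] s = μH[(d : ℝ)] T := by
    conv_lhs => rw [← himg]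
    exact hφ.hausdorffMeasure_image (Or.inl (by positivity)) T
  -- T is compact
  have hTcomp : IsCompact T := by
    refine Metric.isCompact_of_isClosed_isBounded
      (hcomp.isClosed.preimage hφ.continuous) ?_
    exact hφ.antilipschitz.isBounded_preimage hcomp.isBounded
  -- φ as an affine map
  let Lmap : EuclideanSpace ℝ (Fin d) →ₗ[ℝ] EuclideanSpace ℝ (Fin m) :=
    V.subtype.comp (B.repr.symm.toLinearEquiv.toLinearMap)
  let ψ : EuclideanSpace ℝ (Fin d) →ᵃ[ℝ] EuclideanSpace ℝ (Fin m) :=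
    ⟨φ, Lmap, by intro pp v; simp [φ, Lmap, add_comm, add_assoc, add_left_comm]⟩
  have hLinj : Function.Injective Lmap := by
    intro a b hab
    have := B.repr.symm.injective (Subtype.ext hab : B.repr.symm a = B.repr.symm b)
    exact this
  have hTconv : Convex ℝ T := hconv.affine_preimage ψ
  -- vectorSpan of T maps to vectorSpan of s
  have hvs : vectorSpan ℝ s = Submodule.map Lmap (vectorSpan ℝ T) := by
    rw [vectorSpan_def, vectorSpan_def, ← himg]
    have : (φ '' T) -ᵥ (φ '' T) = Lmap '' (T -ᵥ T) := by
      show Set.image2 _ _ _ = _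
      rw [Set.image2_image_left, Set.image2_image_right]
      show Set.image2 (fun a b => φ a - φ b) T T = _
      have : (fun a b : EuclideanSpace ℝ (Fin d) => φ a - φ b)
          = fun a b => Lmap (a - b) := by
        funext a b
        show p + _ - (p + _) = _
        simp only [Lmap, LinearMap.coe_comp, Function.comp_apply, Submodule.coe_subtype,
          LinearEquiv.coe_coe, LinearIsometryEquiv.coe_toLinearEquiv, map_sub,
          AddSubgroupClass.coe_sub]
        abel
      rw [this]
      show Set.image2 (fun a b => Lmap (a - b)) T T = Lmap '' Set.image2 (· -ᵥ ·) T T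
      rw [← Set.image_image2]
      rfl
    rw [this, Submodule.span_image]
  have hfr : Module.finrank ℝ (vectorSpan ℝ T) = d := by
    have h1 := (Submodule.equivMapOfInjective Lmap hLinj (vectorSpan ℝ T)).finrank_eq
    rw [← hvs, ← hV] at h1
    exact h1.trans hdV
  have hvsT : vectorSpan ℝ T = ⊤ := by
    apply Submodule.eq_top_of_finrank_eq
    rw [hfr, finrank_euclideanSpace_fin]
  have hTne : T.Nonempty := by
    obtain ⟨v, hv⟩ := hrange hp
    exact ⟨v, by simp only [hT, Set.mem_preimage, hv]; exact hp⟩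
  have hint : (interior T).Nonempty := by
    rw [hTconv.interior_nonempty_iff_affineSpan_eq_top]
    exact (AffineSubspace.affineSpan_eq_top_iff_vectorSpan_eq_top_of_nonempty ℝ _ _ hTne).mpr hvsT
  obtain ⟨t0, ht0⟩ := hint
  obtain ⟨r, hr, hball⟩ := Metric.isOpen_iff.mp isOpen_interior t0 ht0
  have hballT : Metric.ball t0 r ⊆ T := hball.trans interior_subset
  set e := WithLp.equiv 2 (Fin d → ℝ) with he
  have helip : LipschitzWith 1 (⇑e) := PiLp.lipschitzWith_ofLp 2 _
  have heanti := PiLp.antilipschitzWith_ofLp 2 (fun _ : Fin d => ℝ)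
  have hpi : (μH[(d : ℝ)] : Measure (Fin d → ℝ)) = volume := by
    have := MeasureTheory.hausdorffMeasure_pi_real (ι := Fin d)
    simpa using this
  have hub : μH[(d : ℝ)] (⇑e '' T) ≤ μH[(d : ℝ)] T := by
    have := helip.hausdorffMeasure_image_le (d := (d : ℝ)) (by positivity) T
    simpa using this
  have hopen : IsOpen (⇑e '' Metric.ball t0 r) := by
    rw [Equiv.image_eq_preimage_symm]
    exact Metric.isOpen_ball.preimage (PiLp.continuous_toLp 2 _)
  have hlow : 0 < μH[(d : ℝ)] T := by
    have h1 : (0 : ℝ≥0∞) < volume (⇑e '' Metric.ball t0 r) :=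
      hopen.measure_pos volume ⟨e t0, ⟨t0, Metric.mem_ball_self hr, rfl⟩⟩
    have h2 : volume (⇑e '' Metric.ball t0 r) ≤ volume (⇑e '' T) :=
      measure_mono (Set.image_mono hballT)
    rw [← hpi] at h1 h2
    exact lt_of_lt_of_le (lt_of_lt_of_le h1 h2) hub
  have hfin : μH[(d : ℝ)] T < ⊤ := by
    have h1 := heanti.le_hausdorffMeasure_image (d := (d : ℝ)) (by positivity) T
    have h2 : μH[(d : ℝ)] (⇑e '' T) < ⊤ := by
      rw [hpi]
      exact (hTcomp.image helip.continuous).measure_lt_top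
    refine lt_of_le_of_lt h1 (ENNReal.mul_lt_top ?_ h2)
    exact ENNReal.rpow_lt_top_of_nonneg (by positivity) ENNReal.coe_ne_top
  rw [hmeas]
  exact ⟨hlow, hfin.ne⟩

/-- if the neutral belief `ι` over `S` is Lipschitz w.r.t. `d_W1` and the
(strictly positive) density `h` is Lipschitz on `X × Y`, then the belief `β` with
density `h` is also Lipschitz w.r.t. `d_W1`. -/
theorem densityBelief_W1_lipschitz_of_neutral_W1_lipschitz
    {X : Type*} [MetricSpace X] [CompactSpace X] {m : ℕ}
    (Y : Set (EuclideanSpace ℝ (Fin m)))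
    (hYne : Y.Nonempty) (hYcomp : IsCompact Y) (hYconv : Convex ℝ Y)
    (S : X → Set (EuclideanSpace ℝ (Fin m)))
    (hSne : ∀ x, (S x).Nonempty) (hSconv : ∀ x, Convex ℝ (S x))
    (hScomp : ∀ x, IsCompact (S x)) (hSY : ∀ x, S x ⊆ Y)
    (Kι : ℝ)
    (hιlip : ∀ x x' : X, dW1 (neutralBelief S x) (neutralBelief S x') ≤ Kι * dist x x')
    (h : X → EuclideanSpace ℝ (Fin m) → ℝ)
    (hpos : ∀ x : X, ∀ y ∈ Y, 0 < h x y)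
    (L : ℝ) (hL : 0 < L)
    (hlip : ∀ x x' : X, ∀ y ∈ Y, ∀ y' ∈ Y,
      |h x y - h x' y'| ≤ L * dist (x, y) (x', y')) :
    ∃ C : ℝ, ∀ x x' : X,
      dW1 (densityBelief S h x) (densityBelief S h x') ≤ C * dist x x' := by
  classical
  rcases isEmpty_or_nonempty X with hX | hX
  · exact ⟨0, fun x => (IsEmpty.false x).elim⟩
  obtain ⟨y0, hy0⟩ := hYne
  -- basic facts about the Hausdorff measures
  set M : X → ℝ≥0∞ := fun x => μH[(affDim (S x) : ℝ)] (S x) with hMdef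
  set lam : X → Measure (EuclideanSpace ℝ (Fin m)) :=
    fun x => (μH[(affDim (S x) : ℝ)]).restrict (S x) with hlamdef
  have hM : ∀ x, 0 < M x ∧ M x ≠ ⊤ :=
    fun x => hausdorff_affDim_pos_ne_top _ (hSne x) (hSconv x) (hScomp x)
  have hSmeas : ∀ x, MeasurableSet (S x) := fun x => (hScomp x).isClosed.measurableSet
  have hlamuniv : ∀ x, lam x Set.univ = M x := by
    intro x; simp [hlamdef, hMdef, Measure.restrict_apply_univ]
  have hlamfin : ∀ x, IsFiniteMeasure (lam x) :=
    fun x => ⟨by rw [hlamuniv]; exact (hM x).2.lt_top⟩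
  -- continuity of the density
  have hcontOn : ∀ x, ContinuousOn (h x) Y := by
    intro x
    have hl : LipschitzOnWith L.toNNReal (h x) Y := by
      rw [lipschitzOnWith_iff_dist_le_mul]
      intro y hy y' hy'
      have h1 := hlip x x y hy y' hy'
      rw [Prod.dist_eq, dist_self, sup_of_le_right dist_nonneg] at h1
      rw [Real.dist_eq, Real.coe_toNNReal _ hL.le]
      exact h1
    exact hl.continuousOn
  -- uniform bounds for the density on X × Y
  obtain ⟨c, Ch, hc, hch, hcCh⟩ : ∃ c Ch : ℝ, 0 < c ∧
      (∀ x : X, ∀ y ∈ Y, c ≤ h x y ∧ h x y ≤ Ch) ∧ c ≤ Ch := by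
    set u : X × EuclideanSpace ℝ (Fin m) → ℝ := fun p => h p.1 p.2 with hu
    have hucont : ContinuousOn u (Set.univ ×ˢ Y) := by
      have : LipschitzOnWith L.toNNReal u (Set.univ ×ˢ Y) := by
        rw [lipschitzOnWith_iff_dist_le_mul]
        intro p hp q hq
        have := hlip p.1 q.1 p.2 hp.2 q.2 hq.2
        rw [Real.dist_eq, Real.coe_toNNReal _ hL.le]
        exact this
      exact this.continuousOn
    have hcomp : IsCompact (Set.univ ×ˢ Y) := (isCompact_univ : IsCompact (Set.univ : Set X)).prod hYcomp
    have hne : (Set.univ ×ˢ Y).Nonempty := ⟨(Classical.arbitrary X, y0), by simp [hy0]⟩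
    obtain ⟨p0, hp0mem, hp0⟩ := hcomp.exists_isMinOn hne hucont
    obtain ⟨p1, hp1mem, hp1⟩ := hcomp.exists_isMaxOn hne hucont
    refine ⟨u p0, u p1, hpos p0.1 p0.2 hp0mem.2, fun x y hy => ⟨?_, ?_⟩, ?_⟩
    · exact hp0 (Set.mk_mem_prod (Set.mem_univ x) hy)
    · exact hp1 (Set.mk_mem_prod (Set.mem_univ x) hy)
    · exact le_trans (hp0 hp1mem) (le_refl _)
  set D : ℝ := Metric.diam Y with hDdef
  have hD : 0 ≤ D := Metric.diam_nonneg
  -- integrability tools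
  have key_int : ∀ (x : X) (φ : EuclideanSpace ℝ (Fin m) → ℝ),
      ContinuousOn φ Y → Integrable φ (lam x) := by
    intro x φ hφ
    haveI := hlamfin x
    have hφS : ContinuousOn φ (S x) := hφ.mono (hSY x)
    obtain ⟨K, hK⟩ := (hScomp x).exists_bound_of_continuousOn hφS
    have hmeas' : AEStronglyMeasurable φ (lam x) := hφS.aestronglyMeasurable (hSmeas x)
    refine Integrable.mono' (integrable_const K) hmeas' ?_
    have hae : ∀ᵐ y ∂(lam x), y ∈ S x := ae_restrict_mem (hSmeas x)
    exact hae.mono fun y hy => hK y hy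
  set ι : X → Measure (EuclideanSpace ℝ (Fin m)) := neutralBelief S with hιdef
  have hιeq : ∀ x, ι x = (M x)⁻¹ • lam x := fun x => rfl
  have hιuniv : ∀ x, ι x Set.univ = 1 := by
    intro x
    rw [hιeq x]
    simp only [Measure.smul_apply, smul_eq_mul, hlamuniv x]
    exact ENNReal.inv_mul_cancel (hM x).1.ne' (hM x).2
  have hιprob : ∀ x, IsProbabilityMeasure (ι x) := fun x => ⟨hιuniv x⟩
  have hMinv_ne_top : ∀ x, (M x)⁻¹ ≠ ⊤ := fun x => ENNReal.inv_ne_top.mpr (hM x).1.ne'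
  have ι_int : ∀ (x : X) (φ : EuclideanSpace ℝ (Fin m) → ℝ), ContinuousOn φ Y →
      Integrable φ (ι x) := by
    intro x φ hφ
    rw [hιeq x]
    exact (key_int x φ hφ).smul_measure (hMinv_ne_top x)
  have hae : ∀ x, ∀ᵐ y ∂(ι x), y ∈ S x := by
    intro x
    rw [hιeq x]
    exact Measure.ae_smul_measure (ae_restrict_mem (hSmeas x)) _
  have boundι : ∀ (x : X) (φ : EuclideanSpace ℝ (Fin m) → ℝ) (K : ℝ),
      (∀ y ∈ Y, |φ y| ≤ K) → |∫ y, φ y ∂(ι x)| ≤ K := by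
    intro x φ K hK
    haveI := hιprob x
    have h1 : ∀ᵐ y ∂(ι x), ‖φ y‖ ≤ K :=
      (hae x).mono fun y hy => by simpa [Real.norm_eq_abs] using hK y (hSY x hy)
    have := norm_integral_le_of_norm_le_const h1
    simpa [measure_univ, Real.norm_eq_abs] using this
  have congrι : ∀ (x : X) (φ ψ : EuclideanSpace ℝ (Fin m) → ℝ), Set.EqOn φ ψ (S x) →
      ∫ y, φ y ∂(ι x) = ∫ y, ψ y ∂(ι x) := by
    intro x φ ψ hψ
    rw [hιeq x, integral_smul_measure, integral_smul_measure]
    congr 1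
    exact setIntegral_congr_fun (hSmeas x) hψ
  -- Wasserstein extraction
  set Kι' : ℝ := max Kι 0 with hKι'def
  have hKι'0 : 0 ≤ Kι' := le_max_right _ _
  have bddA : ∀ x x' : X, BddAbove {r | ∃ f : EuclideanSpace ℝ (Fin m) → ℝ,
      LipschitzWith 1 f ∧ r = (∫ y, f y ∂(ι x)) - ∫ y, f y ∂(ι x')} := by
    intro x x'
    refine ⟨2 * D, ?_⟩
    rintro r ⟨f, hf, rfl⟩
    have hg : ∀ z : X, |∫ y, (f y - f y0) ∂(ι z)| ≤ D := by
      intro z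
      refine boundι z _ D fun y hy => ?_
      calc |f y - f y0| ≤ dist y y0 := by
            have := hf.dist_le_mul y y0
            rw [Real.dist_eq] at this
            simpa using this
        _ ≤ D := Metric.dist_le_diam_of_mem hYcomp.isBounded hy hy0
    have hsub : ∀ z : X, ∫ y, (f y - f y0) ∂(ι z) = (∫ y, f y ∂(ι z)) - f y0 := by
      intro z
      haveI := hιprob z
      have hint : Integrable f (ι z) := ι_int z f hf.continuous.continuousOn
      rw [integral_sub hint (integrable_const _), integral_const]
      simp [measure_univ]
    have h1 := (abs_le.mp (hg x)).2
    have h2 := (abs_le.mp (hg x')).1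
    rw [hsub x] at h1
    rw [hsub x'] at h2
    linarith
  have W1one : ∀ (x x' : X) (f : EuclideanSpace ℝ (Fin m) → ℝ), LipschitzWith 1 f →
      (∫ y, f y ∂(ι x)) - ∫ y, f y ∂(ι x') ≤ Kι' * dist x x' := by
    intro x x' f hf
    have hmem : (∫ y, f y ∂(ι x)) - ∫ y, f y ∂(ι x') ∈ {r | ∃ f : EuclideanSpace ℝ (Fin m) → ℝ,
        LipschitzWith 1 f ∧ r = (∫ y, f y ∂(ι x)) - ∫ y, f y ∂(ι x')} := ⟨f, hf, rfl⟩
    have h1 := le_csSup (bddA x x') hmem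
    have h2 : dW1 (ι x) (ι x') ≤ Kι * dist x x' := hιlip x x'
    unfold dW1 at h2
    refine le_trans (le_trans h1 h2) ?_
    have := mul_le_mul_of_nonneg_right (le_max_left Kι 0) (dist_nonneg (x := x) (y := x'))
    exact this
  have W1gen : ∀ (x x' : X) (φ : EuclideanSpace ℝ (Fin m) → ℝ) (K : ℝ≥0),
      LipschitzWith K φ →
      (∫ y, φ y ∂(ι x)) - ∫ y, φ y ∂(ι x') ≤ (K : ℝ) * Kι' * dist x x' := by
    intro x x' φ K hφ
    rcases eq_or_ne K 0 with rfl | hK0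
    · have hconst : ∀ y, φ y = φ y0 := by
        intro y
        have := hφ.dist_le_mul y y0
        simp only [NNReal.coe_zero, ENNReal.coe_zero, zero_mul] at this
        have h0 := dist_nonneg (x := φ y) (y := φ y0)
        have : dist (φ y) (φ y0) = 0 := le_antisymm (by simpa using this) h0
        exact dist_eq_zero.mp this
      have hφeq : φ = fun _ => φ y0 := funext hconst
      rw [hφeq]
      haveI := hιprob x
      haveI := hιprob x'
      simp only [integral_const, measure_univ, probReal_univ, ENNReal.toReal_one, one_smul,
        NNReal.coe_zero, zero_mul, sub_self]
      positivity
    · set ψ : EuclideanSpace ℝ (Fin m) → ℝ := fun y => ((K : ℝ)⁻¹) • φ y with hψdef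
      have hψ : LipschitzWith 1 ψ := by
        have h1 := (lipschitzWith_smul (β := ℝ) ((K : ℝ)⁻¹)).comp hφ
        have h2 : ‖(K : ℝ)⁻¹‖₊ * K = 1 := by
          have hKn : ‖(K : ℝ)⁻¹‖₊ = K⁻¹ := by
            ext
            simp [Real.norm_eq_abs, abs_of_nonneg (inv_nonneg.mpr K.coe_nonneg)]
          rw [hKn, inv_mul_cancel₀ hK0]
        rw [h2] at h1
        exact h1
      have h1 := W1one x x' ψ hψ
      have hsm : ∀ z : X, ∫ y, ψ y ∂(ι z) = (K : ℝ)⁻¹ * ∫ y, φ y ∂(ι z) := by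
        intro z
        rw [hψdef]
        exact integral_smul _ _
      rw [hsm x, hsm x'] at h1
      have hKpos : (0 : ℝ) < K := by
        exact_mod_cast pos_iff_ne_zero.mpr hK0
      have := mul_le_mul_of_nonneg_left h1 hKpos.le
      rw [mul_sub, ← mul_assoc, ← mul_assoc, mul_inv_cancel₀ hKpos.ne', one_mul, one_mul] at this
      calc (∫ y, φ y ∂(ι x)) - ∫ y, φ y ∂(ι x') ≤ (K : ℝ) * (Kι' * dist x x') := this
        _ = (K : ℝ) * Kι' * dist x x' := by ring
  -- absolute-value version of the Wasserstein bound
  have absW1 : ∀ (x x' : X) (φ : EuclideanSpace ℝ (Fin m) → ℝ) (K : ℝ≥0),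
      LipschitzWith K φ →
      |(∫ y, φ y ∂(ι x)) - ∫ y, φ y ∂(ι x')| ≤ (K : ℝ) * Kι' * dist x x' := by
    intro x x' φ K hφ
    rw [abs_sub_le_iff]
    constructor
    · exact W1gen x x' φ K hφ
    · have := W1gen x' x φ K hφ
      rwa [dist_comm x' x] at this
  -- Lipschitz bound for h in the y-variable
  have hylip : ∀ (x : X), ∀ y ∈ Y, ∀ y' ∈ Y, |h x y - h x y'| ≤ L * dist y y' := by
    intro x y hy y' hy'
    have h1 := hlip x x y hy y' hy'
    rwa [Prod.dist_eq, dist_self, sup_of_le_right dist_nonneg] at h1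
  -- the density-belief measures
  set N : X → ℝ≥0∞ := fun x =>
    ((lam x).withDensity (fun y => ENNReal.ofReal (h x y))) Set.univ with hNdef
  have hβeq : ∀ x, densityBelief S h x
      = (N x)⁻¹ • ((lam x).withDensity (fun y => ENNReal.ofReal (h x y))) :=
    fun x => rfl
  have hNlint : ∀ x, N x = ∫⁻ y, ENNReal.ofReal (h x y) ∂(lam x) := by
    intro x
    show ((lam x).withDensity (fun y => ENNReal.ofReal (h x y))) Set.univ = _
    rw [withDensity_apply _ MeasurableSet.univ, Measure.restrict_univ]
  have hN0 : ∀ x, N x ≠ 0 := by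
    intro x
    have hlb : ENNReal.ofReal c * M x ≤ N x := by
      rw [hNlint x, ← hlamuniv x, ← lintegral_const]
      refine lintegral_mono_ae ?_
      exact (ae_restrict_mem (hSmeas x)).mono fun y hy =>
        ENNReal.ofReal_le_ofReal (hch x y (hSY x hy)).1
    have hpos' : 0 < ENNReal.ofReal c * M x :=
      ENNReal.mul_pos (by simpa using ENNReal.ofReal_pos.mpr hc) (hM x).1.ne'
    exact (lt_of_lt_of_le hpos' hlb).ne'
  have hNtop : ∀ x, N x ≠ ⊤ := by
    intro x
    have hub : N x ≤ ENNReal.ofReal Ch * M x := by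
      rw [hNlint x, ← hlamuniv x, ← lintegral_const]
      refine lintegral_mono_ae ?_
      exact (ae_restrict_mem (hSmeas x)).mono fun y hy =>
        ENNReal.ofReal_le_ofReal (hch x y (hSY x hy)).2
    exact (lt_of_le_of_lt hub (ENNReal.mul_lt_top ENNReal.ofReal_lt_top (hM x).2.lt_top)).ne
  have hdens : ∀ x, AEMeasurable (fun y => Real.toNNReal (h x y)) (lam x) := by
    intro x
    have h1 : AEMeasurable (h x) (lam x) :=
      ((hcontOn x).mono (hSY x)).aemeasurable (hSmeas x)
    exact measurable_real_toNNReal.comp_aemeasurable h1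
  have hβuniv : ∀ x, densityBelief S h x Set.univ = 1 := by
    intro x
    rw [hβeq x]
    simp only [Measure.smul_apply, smul_eq_mul]
    exact ENNReal.inv_mul_cancel (hN0 x) (hNtop x)
  have hβprob : ∀ x, IsProbabilityMeasure (densityBelief S h x) :=
    fun x => ⟨hβuniv x⟩
  have int_beta : ∀ (x : X) (g : EuclideanSpace ℝ (Fin m) → ℝ), ContinuousOn g Y →
      Integrable g (densityBelief S h x) := by
    intro x g hg
    rw [hβeq x]
    refine Integrable.smul_measure ?_ (ENNReal.inv_ne_top.mpr (hN0 x))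
    have heqd : (fun y => ENNReal.ofReal (h x y))
        = fun y => ((Real.toNNReal (h x y) : ℝ≥0) : ℝ≥0∞) := rfl
    rw [heqd, integrable_withDensity_iff_integrable_smul₀ (hdens x)]
    have hint : Integrable (fun y => h x y * g y) (lam x) :=
      key_int x _ ((hcontOn x).mul hg)
    refine hint.congr ?_
    refine (ae_restrict_mem (hSmeas x)).mono fun y hy => ?_
    have h0 : 0 ≤ h x y := le_trans hc.le (hch x y (hSY x hy)).1
    simp [NNReal.smul_def, Real.coe_toNNReal _ h0]
  have compute : ∀ (x : X) (g : EuclideanSpace ℝ (Fin m) → ℝ), ContinuousOn g Y →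
      ∫ y, g y ∂(densityBelief S h x)
        = (∫ y, g y * h x y ∂(ι x)) / (∫ y, h x y ∂(ι x)) := by
    intro x g hg
    haveI := hlamfin x
    set J1 : ℝ := ∫ y, h x y * g y ∂(lam x) with hJ1
    set J2 : ℝ := ∫ y, h x y ∂(lam x) with hJ2
    have hJ2pos : 0 < J2 := by
      have h1 := integral_mono_ae (μ := lam x) (integrable_const c)
        (key_int x (h x) (hcontOn x))
        ((ae_restrict_mem (hSmeas x)).mono fun y hy => (hch x y (hSY x hy)).1)
      rw [integral_const, smul_eq_mul] at h1
      have h2 : 0 < ((lam x) Set.univ).toReal := by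
        rw [hlamuniv x]
        exact ENNReal.toReal_pos (hM x).1.ne' (hM x).2
      rw [hJ2]
      nlinarith [show (lam x).real univ = ((lam x) univ).toReal from rfl]
    -- left-hand side
    have lhs_eq : ∫ y, g y ∂(densityBelief S h x) = (N x).toReal⁻¹ * J1 := by
      rw [hβeq x, integral_smul_measure]
      have heqd : (fun y => ENNReal.ofReal (h x y))
          = fun y => ((Real.toNNReal (h x y) : ℝ≥0) : ℝ≥0∞) := rfl
      rw [heqd, integral_withDensity_eq_integral_smul₀ (hdens x) g]
      have hcongr : ∫ y, (Real.toNNReal (h x y) : ℝ≥0) • g y ∂(lam x) = J1 := by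
        refine setIntegral_congr_fun (hSmeas x) fun y hy => ?_
        have h0 : 0 ≤ h x y := le_trans hc.le (hch x y (hSY x hy)).1
        simp [NNReal.smul_def, Real.coe_toNNReal _ h0]
      rw [hcongr, ENNReal.toReal_inv]
      rfl
    have hNtoReal : (N x).toReal = J2 := by
      rw [hNlint x, hJ2]
      rw [integral_eq_lintegral_of_nonneg_ae
        ((ae_restrict_mem (hSmeas x)).mono fun y hy => le_trans hc.le (hch x y (hSY x hy)).1)
        (((hcontOn x).mono (hSY x)).aestronglyMeasurable (hSmeas x))]
    -- right-hand side
    have hιint : ∀ φ : EuclideanSpace ℝ (Fin m) → ℝ,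
        ∫ y, φ y ∂(ι x) = (M x)⁻¹.toReal * ∫ y, φ y ∂(lam x) := by
      intro φ
      rw [hιeq x, integral_smul_measure]
      rfl
    have hnum : ∫ y, g y * h x y ∂(ι x) = (M x)⁻¹.toReal * J1 := by
      rw [hιint]
      congr 1
      rw [hJ1]
      congr 1
      funext y
      ring
    have hden : ∫ y, h x y ∂(ι x) = (M x)⁻¹.toReal * J2 := hιint (h x)
    have hmi : (0 : ℝ) < (M x)⁻¹.toReal := by
      rw [ENNReal.toReal_inv]
      exact inv_pos.mpr (ENNReal.toReal_pos (hM x).1.ne' (hM x).2)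
    rw [lhs_eq, hnum, hden, hNtoReal, mul_div_mul_left _ _ hmi.ne']
    rw [div_eq_inv_mul]
  -- the constant
  have hCh0 : 0 ≤ Ch := hc.le.trans hcCh
  refine ⟨((D * L + Ch) * Kι' + D * L) / c + D * Ch * (L * Kι' + L) / (c * c),
    fun x x' => ?_⟩
  set δ : ℝ := dist x x' with hδdef
  have hδ0 : 0 ≤ δ := dist_nonneg
  have hCfin0 : 0 ≤ ((D * L + Ch) * Kι' + D * L) / c + D * Ch * (L * Kι' + L) / (c * c) := by
    have h1 : 0 ≤ (D * L + Ch) * Kι' + D * L :=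
      add_nonneg (mul_nonneg (add_nonneg (mul_nonneg hD hL.le) hCh0) hKι'0)
        (mul_nonneg hD hL.le)
    have h2 : 0 ≤ D * Ch * (L * Kι' + L) :=
      mul_nonneg (mul_nonneg hD hCh0) (add_nonneg (mul_nonneg hL.le hKι'0) hL.le)
    exact add_nonneg (div_nonneg h1 hc.le) (div_nonneg h2 (by positivity))
  apply Real.sSup_le _ (mul_nonneg hCfin0 hδ0)
  rintro r ⟨f, hf, rfl⟩
  -- replace f by g := f - f y0
  set g : EuclideanSpace ℝ (Fin m) → ℝ := fun y => f y - f y0 with hgdef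
  have hgcont : ContinuousOn g Y := (hf.continuous.sub continuous_const).continuousOn
  have hgbdd : ∀ y ∈ Y, |g y| ≤ D := by
    intro y hy
    have h1 : |f y - f y0| ≤ dist y y0 := by
      have := hf.dist_le_mul y y0
      rw [Real.dist_eq] at this
      simpa using this
    exact le_trans h1 (Metric.dist_le_diam_of_mem hYcomp.isBounded hy hy0)
  have hglip : ∀ y y', |g y - g y'| ≤ dist y y' := by
    intro y y'
    have h1 : |f y - f y'| ≤ dist y y' := by
      have := hf.dist_le_mul y y'
      rw [Real.dist_eq] at this
      simpa using this
    have he : g y - g y' = f y - f y' := by rw [hgdef]; ring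
    rwa [he]
  have hfβ : ∀ z : X, ∫ y, f y ∂(densityBelief S h z)
      = (∫ y, g y ∂(densityBelief S h z)) + f y0 := by
    intro z
    haveI := hβprob z
    have hint : Integrable f (densityBelief S h z) :=
      int_beta z f hf.continuous.continuousOn
    rw [hgdef]
    rw [integral_sub hint (integrable_const _), integral_const]
    simp [measure_univ]
  rw [hfβ x, hfβ x']
  have hxx' : ∀ y ∈ Y, |h x y - h x' y| ≤ L * δ := by
    intro y hy
    have h1 := hlip x x' y hy y hy
    rwa [Prod.dist_eq, dist_self, sup_of_le_left dist_nonneg, ← hδdef] at h1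
  rw [compute x g hgcont, compute x' g hgcont]
  set α : ℝ := ∫ y, h x y ∂(ι x) with hαdef
  set b : ℝ := ∫ y, h x' y ∂(ι x') with hbdef
  set A : ℝ := ∫ y, g y * h x y ∂(ι x) with hAdef
  set B : ℝ := ∫ y, g y * h x' y ∂(ι x') with hBdef
  have hconst_int : ∀ z : X, (∫ _, (c : ℝ) ∂(ι z)) = c := by
    intro z
    haveI := hιprob z
    simp [measure_univ]
  have hα1 : c ≤ α := by
    have h1 := integral_mono_ae (μ := ι x) (integrable_const c) (ι_int x (h x) (hcontOn x))
      ((hae x).mono fun y hy => (hch x y (hSY x hy)).1)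
    rwa [hconst_int x, ← hαdef] at h1
  have hb1 : c ≤ b := by
    have h1 := integral_mono_ae (μ := ι x') (integrable_const c) (ι_int x' (h x') (hcontOn x'))
      ((hae x').mono fun y hy => (hch x' y (hSY x' hy)).1)
    rwa [hconst_int x', ← hbdef] at h1
  have hα0 : 0 < α := lt_of_lt_of_le hc hα1
  have hb0 : 0 < b := lt_of_lt_of_le hc hb1
  have hB : |B| ≤ D * Ch := by
    rw [hBdef]
    refine boundι x' _ _ fun y hy => ?_
    rw [abs_mul]
    have h2 : |h x' y| ≤ Ch := by
      rw [abs_of_pos (hpos x' y hy)]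
      exact (hch x' y hy).2
    exact mul_le_mul (hgbdd y hy) h2 (abs_nonneg _) hD
  -- the product g * h x is Lipschitz on Y
  have hp1 : LipschitzOnWith (Real.toNNReal (D * L + Ch)) (fun y => g y * h x y) Y := by
    rw [lipschitzOnWith_iff_dist_le_mul]
    intro y hy y' hy'
    rw [Real.dist_eq, Real.coe_toNNReal _ (add_nonneg (mul_nonneg hD hL.le) hCh0)]
    have e1 : g y * h x y - g y' * h x y'
        = g y * (h x y - h x y') + h x y' * (g y - g y') := by ring
    calc |g y * h x y - g y' * h x y'|
        ≤ |g y| * |h x y - h x y'| + |h x y'| * |g y - g y'| := by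
          rw [e1]
          exact le_trans (abs_add_le _ _) (by rw [abs_mul, abs_mul])
      _ ≤ D * (L * dist y y') + Ch * dist y y' := by
          refine add_le_add
            (mul_le_mul (hgbdd y hy) (hylip x y hy y' hy') (abs_nonneg _) hD) ?_
          refine mul_le_mul ?_ (hglip y y') (abs_nonneg _) hCh0
          rw [abs_of_pos (hpos x y' hy')]
          exact (hch x y' hy').2
      _ = (D * L + Ch) * dist y y' := by ring
  obtain ⟨p1e, hp1lip, hp1eq⟩ := hp1.extend_real
  have hA_eq : A = ∫ y, p1e y ∂(ι x) := by
    rw [hAdef]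
    exact congrι x _ _ fun y hy => hp1eq (hSY x hy)
  have h_1 : |(∫ y, p1e y ∂(ι x)) - ∫ y, p1e y ∂(ι x')| ≤ (D * L + Ch) * Kι' * δ := by
    have h2 := absW1 x x' p1e _ hp1lip
    rwa [Real.coe_toNNReal _ (add_nonneg (mul_nonneg hD hL.le) hCh0), ← hδdef] at h2
  have h_2 : |(∫ y, p1e y ∂(ι x')) - B| ≤ D * (L * δ) := by
    have e2 : ∫ y, p1e y ∂(ι x') = ∫ y, g y * h x y ∂(ι x') :=
      (congrι x' _ _ fun y hy => hp1eq (hSY x' hy)).symm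
    rw [e2, hBdef]
    have hint1 : Integrable (fun y => g y * h x y) (ι x') :=
      ι_int x' _ (hgcont.mul (hcontOn x))
    have hint2 : Integrable (fun y => g y * h x' y) (ι x') :=
      ι_int x' _ (hgcont.mul (hcontOn x'))
    rw [← integral_sub hint1 hint2]
    refine boundι x' _ _ fun y hy => ?_
    have e3 : g y * h x y - g y * h x' y = g y * (h x y - h x' y) := by ring
    rw [e3, abs_mul]
    exact mul_le_mul (hgbdd y hy) (hxx' y hy) (abs_nonneg _) hD
  have hAB : |A - B| ≤ (D * L + Ch) * Kι' * δ + D * (L * δ) := by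
    rw [hA_eq]
    calc |(∫ y, p1e y ∂(ι x)) - B|
        ≤ |(∫ y, p1e y ∂(ι x)) - ∫ y, p1e y ∂(ι x')|
          + |(∫ y, p1e y ∂(ι x')) - B| := abs_sub_le _ _ _
      _ ≤ (D * L + Ch) * Kι' * δ + D * (L * δ) := add_le_add h_1 h_2
  -- h x is Lipschitz on Y
  have hp2 : LipschitzOnWith (Real.toNNReal L) (h x) Y := by
    rw [lipschitzOnWith_iff_dist_le_mul]
    intro y hy y' hy'
    rw [Real.dist_eq, Real.coe_toNNReal _ hL.le]
    exact hylip x y hy y' hy'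
  obtain ⟨p2e, hp2lip, hp2eq⟩ := hp2.extend_real
  have hαb : |α - b| ≤ L * Kι' * δ + L * δ := by
    have hα_eq : α = ∫ y, p2e y ∂(ι x) := by
      rw [hαdef]
      exact congrι x _ _ fun y hy => hp2eq (hSY x hy)
    have h_1' : |(∫ y, p2e y ∂(ι x)) - ∫ y, p2e y ∂(ι x')| ≤ L * Kι' * δ := by
      have h2 := absW1 x x' p2e _ hp2lip
      rwa [Real.coe_toNNReal _ hL.le, ← hδdef] at h2
    have h_2' : |(∫ y, p2e y ∂(ι x')) - b| ≤ L * δ := by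
      have e2 : ∫ y, p2e y ∂(ι x') = ∫ y, h x y ∂(ι x') :=
        (congrι x' _ _ fun y hy => hp2eq (hSY x' hy)).symm
      rw [e2, hbdef]
      have hint1 : Integrable (h x) (ι x') := ι_int x' _ (hcontOn x)
      have hint2 : Integrable (h x') (ι x') := ι_int x' _ (hcontOn x')
      rw [← integral_sub hint1 hint2]
      exact boundι x' _ _ fun y hy => hxx' y hy
    rw [hα_eq]
    calc |(∫ y, p2e y ∂(ι x)) - b|
        ≤ |(∫ y, p2e y ∂(ι x)) - ∫ y, p2e y ∂(ι x')|
          + |(∫ y, p2e y ∂(ι x')) - b| := abs_sub_le _ _ _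
      _ ≤ L * Kι' * δ + L * δ := add_le_add h_1' h_2'
  -- final algebra
  have e : (A / α + f y0) - (B / b + f y0) = (A - B) / α + (B / b) * ((b - α) / α) := by
    field_simp
    ring
  rw [e]
  have f1 : (A - B) / α ≤ (((D * L + Ch) * Kι' + D * L) * δ) / c := by
    refine div_le_div₀ (by nlinarith [mul_nonneg (mul_nonneg (add_nonneg (mul_nonneg hD hL.le) hCh0) hKι'0) hδ0, mul_nonneg hD (mul_nonneg hL.le hδ0)]) ?_ hc hα1
    refine le_trans (le_abs_self _) (le_trans hAB ?_)
    nlinarith [hAB]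
  have f2 : (B / b) * ((b - α) / α) ≤ (D * Ch) * ((L * Kι' + L) * δ) / (c * c) := by
    have u1 : |B / b| ≤ (D * Ch) / c := by
      rw [abs_div, abs_of_pos hb0]
      exact div_le_div₀ (mul_nonneg hD hCh0) hB hc hb1
    have u2 : |(b - α) / α| ≤ ((L * Kι' + L) * δ) / c := by
      rw [abs_div, abs_of_pos hα0, abs_sub_comm]
      refine div_le_div₀ ?_ ?_ hc hα1
      · nlinarith [mul_nonneg (mul_nonneg hL.le hKι'0) hδ0, mul_nonneg hL.le hδ0]
      · refine le_trans hαb ?_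
        nlinarith
    calc (B / b) * ((b - α) / α) ≤ |(B / b) * ((b - α) / α)| := le_abs_self _
      _ = |B / b| * |(b - α) / α| := abs_mul _ _
      _ ≤ ((D * Ch) / c) * (((L * Kι' + L) * δ) / c) :=
          mul_le_mul u1 u2 (abs_nonneg _) (div_nonneg (mul_nonneg hD hCh0) hc.le)
      _ = (D * Ch) * ((L * Kι' + L) * δ) / (c * c) := by ring
  have efinal : (((D * L + Ch) * Kι' + D * L) * δ) / c
      + (D * Ch) * ((L * Kι' + L) * δ) / (c * c)
      = (((D * L + Ch) * Kι' + D * L) / c + D * Ch * (L * Kι' + L) / (c * c)) * δ := by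
    ring
  linarith [f1, f2]
end

section
/- Let X be a metric space, Y ⊂ ℝ^m a nonempty compact convex set, and S : X ⇉ Y a Lipschitz set-valued map (with respect to the Hausdorff distance) such that each S(x) is convex, compact and dim(S(x)) = k for every x ∈ X (constant affine dimension). Then the k-dimensional volume function x ↦ λ_k(S(x)) is locally Lipschitz on X. If in addition X is compact, then x ↦ λ_k(S(x)) is Lipschitz on X. -/
open Metric Set MeasureTheory Module
open scoped ENNReal NNReal

set_option linter.unusedSectionVars false
set_option linter.unusedVariables false
set_option maxHeartbeats 1000000

namespace KVolAux

variable {E : Type*} [NormedAddCommGroup E] [InnerProductSpace ℝ E] [FiniteDimensional ℝ E]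

instance (V : Submodule ℝ E) : Submodule.HasOrthogonalProjection V :=
  haveI : CompleteSpace V := FiniteDimensional.complete ℝ V
  inferInstance

/-- the affine orthogonal projection onto `z + V`. -/
noncomputable def pr (V : Submodule ℝ E) (z : E) (p : E) : E :=
  z + (Submodule.orthogonalProjection V (p - z) : E)

lemma pr_dist_le (V : Submodule ℝ E) (z : E) (p q : E) :
    dist (pr V z p) (pr V z q) ≤ dist p q := by
  have h : pr V z p - pr V z q = (Submodule.orthogonalProjection V (p - q) : E) := by
    simp only [pr, add_sub_add_left_eq_sub]
    rw [← Submodule.coe_sub, ← map_sub, show p - z - (q - z) = p - q from by abel]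
  rw [dist_eq_norm, h, dist_eq_norm]
  calc ‖(Submodule.orthogonalProjection V (p - q) : E)‖
      ≤ ‖Submodule.orthogonalProjection V‖ * ‖p - q‖ := (Submodule.orthogonalProjection V).le_opNorm _
    _ ≤ 1 * ‖p - q‖ :=
        mul_le_mul_of_nonneg_right (Submodule.orthogonalProjectionOnto_norm_le V) (norm_nonneg _)
    _ = ‖p - q‖ := one_mul _

lemma pr_lipschitz (V : Submodule ℝ E) (z : E) : LipschitzWith 1 (pr V z) :=
  LipschitzWith.of_dist_le_mul fun p q => by
    rw [NNReal.coe_one, one_mul]; exact pr_dist_le V z p q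

lemma pr_mem {A : AffineSubspace ℝ E} {z : E} (hz : z ∈ A) (p : E) :
    pr A.direction z p ∈ A := by
  have := AffineSubspace.vadd_mem_of_mem_direction
    (SetLike.coe_mem (Submodule.orthogonalProjection A.direction (p - z))) hz
  simpa [pr, vadd_eq_add, add_comm] using this

lemma pr_eq_self {A : AffineSubspace ℝ E} {z p : E} (hz : z ∈ A) (hp : p ∈ A) :
    pr A.direction z p = p := by
  have hmem : p - z ∈ A.direction := AffineSubspace.vsub_mem_direction hp hz
  have h2 : (Submodule.orthogonalProjection A.direction (p - z) : E) = p - z :=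
    Submodule.starProjection_eq_self_iff.2 hmem
  rw [pr, h2]; abel

lemma pr_image_convex (V : Submodule ℝ E) (z : E) {s : Set E} (hs : Convex ℝ s) :
    Convex ℝ (pr V z '' s) := by
  rintro _ ⟨a, ha, rfl⟩ _ ⟨b, hb, rfl⟩ p q hp hq hpq
  refine ⟨p • a + q • b, hs ha hb hp hq hpq, ?_⟩
  simp only [pr]
  have h1 : p • a + q • b - z = p • (a - z) + q • (b - z) := by
    match_scalars <;> linarith
  rw [h1, map_add, _root_.map_smul, _root_.map_smul]
  push_cast
  match_scalars <;> linarith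

/-- scaling map about `z` is Lipschitz. -/
lemma scale_lipschitz (z : E) (a : ℝ) : LipschitzWith ‖a‖₊ (fun x => z + a • (x - z)) :=
  LipschitzWith.of_dist_le_mul fun p q => by
    rw [dist_eq_norm, dist_eq_norm]
    have : z + a • (p - z) - (z + a • (q - z)) = a • (p - q) := by
      module
    rw [this, norm_smul, coe_nnnorm]

lemma exists_dist_le {α : Type*} [MetricSpace α] {s t : Set α} {p : α}
    (hp : p ∈ s) (hsb : Bornology.IsBounded s) (ht : IsCompact t) (htne : t.Nonempty) :
    ∃ q ∈ t, dist p q ≤ hausdorffDist s t := by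
  have hfin : EMetric.hausdorffEdist s t ≠ ⊤ :=
    hausdorffEdist_ne_top_of_nonempty_of_bounded ⟨p, hp⟩ htne hsb ht.isBounded
  obtain ⟨q, hq, hdq⟩ := ht.exists_infDist_eq_dist htne p
  exact ⟨q, hq, hdq ▸ infDist_le_hausdorffDist_of_mem hp hfin⟩


lemma erosion {A : AffineSubspace ℝ E} {D : Set E}
    (hDconv : Convex ℝ D) (hDcl : IsClosed D) (hDA : D ⊆ (A : Set E))
    {z : E} (hzA : z ∈ A) {ρ δ : ℝ} (hδ : 0 ≤ δ)
    (h : ∀ p ∈ closedBall z ρ ∩ (A : Set E), ∃ q ∈ D, dist p q ≤ δ) :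
    closedBall z (ρ - δ) ∩ (A : Set E) ⊆ D := by
  rintro p ⟨hpball, hpA⟩
  by_contra hpD
  have hpρ : dist p z ≤ ρ - δ := mem_closedBall.1 hpball
  have hρδ : (0:ℝ) ≤ ρ - δ := le_trans dist_nonneg hpρ
  have hρ0 : (0:ℝ) ≤ ρ := by linarith
  have hpball' : p ∈ closedBall z ρ ∩ (A : Set E) :=
    ⟨mem_closedBall.2 (hpρ.trans (by linarith)), hpA⟩
  obtain ⟨f, u, hfD, hfp⟩ := geometric_hahn_banach_closed_point hDconv hDcl hpD
  set w : E := (InnerProductSpace.toDual ℝ E).symm f with hwdef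
  have hfw : ∀ y, f y = (inner ℝ w y : ℝ) := by
    intro y
    rw [hwdef]
    exact (InnerProductSpace.toDual_symm_apply).symm
  set V := A.direction with hV
  set wV : E := (Submodule.orthogonalProjection V w : E) with hwVdef
  have hwVmem : wV ∈ V := SetLike.coe_mem _
  have hkey : ∀ y ∈ A, ∀ y' ∈ A, f y - f y' = (inner ℝ wV (y - y') : ℝ) := by
    intro y hy y' hy'
    have hmem : y - y' ∈ V := AffineSubspace.vsub_mem_direction hy hy'
    have ho : (inner ℝ (y - y') (w - wV) : ℝ) = 0 :=
      (Submodule.mem_orthogonal V (w - wV)).1 (Submodule.sub_starProjection_mem_orthogonal w) _ hmem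
    have ho' : (inner ℝ (w - wV) (y - y') : ℝ) = 0 := by rw [real_inner_comm]; exact ho
    have e1 : f y - f y' = (inner ℝ w (y - y') : ℝ) := by rw [hfw, hfw, inner_sub_right]
    have e2 : (inner ℝ w (y - y') : ℝ) - (inner ℝ wV (y - y') : ℝ) = (inner ℝ (w - wV) (y - y') : ℝ) := by
      rw [inner_sub_left]
    linarith
  obtain ⟨d0, hd0, -⟩ := h p hpball'
  have hwV0 : wV ≠ 0 := by
    intro h0
    have := hkey p hpA d0 (hDA hd0)
    rw [h0, inner_zero_left] at this
    have h1 := hfD d0 hd0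
    linarith
  have hnorm : 0 < ‖wV‖ := norm_pos_iff.2 hwV0
  set q := z + (ρ / ‖wV‖) • wV with hqdef
  have hqA : q ∈ A := by
    have := AffineSubspace.vadd_mem_of_mem_direction (V.smul_mem (ρ/‖wV‖) hwVmem) hzA
    simpa [vadd_eq_add, add_comm] using this
  have hq_ball : q ∈ closedBall z ρ := by
    rw [mem_closedBall, dist_eq_norm, hqdef, add_sub_cancel_left, norm_smul]
    rw [Real.norm_eq_abs, abs_of_nonneg (div_nonneg hρ0 hnorm.le)]
    rw [div_mul_cancel₀ _ hnorm.ne']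
  obtain ⟨d, hd, hdq⟩ := h q ⟨hq_ball, hqA⟩
  have e1 : f q - f z = ρ * ‖wV‖ := by
    rw [hkey q hqA z hzA, hqdef, add_sub_cancel_left, real_inner_smul_right,
      real_inner_self_eq_norm_mul_norm]
    field_simp
  have e2 : f q - f d ≤ ‖wV‖ * δ := by
    rw [hkey q hqA d (hDA hd)]
    calc (inner ℝ wV (q - d) : ℝ) ≤ ‖wV‖ * ‖q - d‖ := real_inner_le_norm _ _
      _ ≤ ‖wV‖ * δ := by
          apply mul_le_mul_of_nonneg_left _ hnorm.le
          rw [← dist_eq_norm]; exact hdq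
  have e3 : f p - f z ≤ ‖wV‖ * (ρ - δ) := by
    rw [hkey p hpA z hzA]
    calc (inner ℝ wV (p - z) : ℝ) ≤ ‖wV‖ * ‖p - z‖ := real_inner_le_norm _ _
      _ ≤ ‖wV‖ * (ρ - δ) := by
          apply mul_le_mul_of_nonneg_left _ hnorm.le
          rw [← dist_eq_norm]; exact hpρ
  have hfd : f d < u := hfD d hd
  nlinarith [hnorm, e1, e2, e3, hfd, hfp]

lemma norm_sub_proj_le (V : Submodule ℝ E) (y : E) :
    ‖y - (Submodule.orthogonalProjection V y : E)‖ ≤ ‖y‖ := by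
  set a : E := y - (Submodule.orthogonalProjection V y : E) with ha
  set b : E := (Submodule.orthogonalProjection V y : E) with hb
  have hab : a + b = y := by rw [ha, hb]; abel
  have h0 : (inner ℝ a b : ℝ) = 0 :=
    (Submodule.mem_orthogonal' V a).1 (Submodule.sub_starProjection_mem_orthogonal y) b
      (SetLike.coe_mem _)
  have h1 : ‖a + b‖^2 = ‖a‖^2 + 2 * (inner ℝ a b : ℝ) + ‖b‖^2 := norm_add_sq_real a b
  rw [hab, h0] at h1
  nlinarith [norm_nonneg a, norm_nonneg b, norm_nonneg y]

lemma ball_transfer {K0 Kx : Set E}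
    (hKxconv : Convex ℝ Kx) (hKxcomp : IsCompact Kx)
    (hdim : finrank ℝ (vectorSpan ℝ K0) = finrank ℝ (vectorSpan ℝ Kx))
    {z0 : E} (hz0 : z0 ∈ K0) {ρ0 δ0 : ℝ} (hρ0 : 0 < ρ0) (hδ0 : 0 ≤ δ0) (hδ0ρ : δ0 ≤ ρ0/4)
    (hball0 : closedBall z0 ρ0 ∩ ((affineSpan ℝ K0 : AffineSubspace ℝ E) : Set E) ⊆ K0)
    (happ0 : ∀ p ∈ K0, ∃ q ∈ Kx, dist p q ≤ δ0) :
    ∃ zx ∈ Kx,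
      closedBall zx (ρ0 - δ0) ∩ ((affineSpan ℝ Kx : AffineSubspace ℝ E) : Set E) ⊆ Kx := by
  set A0 : AffineSubspace ℝ E := affineSpan ℝ K0 with hA0
  set Ax : AffineSubspace ℝ E := affineSpan ℝ Kx with hAx
  have hz0A : z0 ∈ A0 := subset_affineSpan ℝ K0 hz0
  set V0 : Submodule ℝ E := A0.direction with hV0
  set Vx : Submodule ℝ E := Ax.direction with hVx
  set Rm : E →L[ℝ] E := ContinuousLinearMap.id ℝ E - Vx.subtypeL.comp (Submodule.orthogonalProjection Vx)
    with hRm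
  have hRmy : ∀ y, Rm y = y - (Submodule.orthogonalProjection Vx y : E) := fun y => rfl
  have hRmnorm : ∀ y, ‖Rm y‖ ≤ ‖y‖ := fun y => by rw [hRmy]; exact norm_sub_proj_le Vx y
  have hRmVx : ∀ y ∈ Vx, Rm y = 0 := by
    intro y hy
    rw [hRmy, ← Submodule.starProjection_apply, Submodule.starProjection_eq_self_iff.2 hy, sub_self]
  set ε : ℝ := 2*δ0/ρ0 with hε
  have hε1 : ε ≤ 1/2 := by rw [hε, div_le_iff₀ hρ0]; linarith
  have hε0 : 0 ≤ ε := by positivity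
  -- tilt bound
  have tilt : ∀ v ∈ V0, ‖Rm v‖ ≤ ε * ‖v‖ := by
    intro v hv
    rcases eq_or_ne v 0 with rfl | hvne
    · simp
    · have hnv : 0 < ‖v‖ := norm_pos_iff.2 hvne
      set u : E := (ρ0/‖v‖) • v with hu
      have huV : u ∈ V0 := V0.smul_mem _ hv
      have hub : z0 + u ∈ closedBall z0 ρ0 ∩ (A0 : Set E) := by
        constructor
        · rw [mem_closedBall, dist_eq_norm, add_sub_cancel_left, hu, norm_smul,
            Real.norm_eq_abs, abs_of_nonneg (by positivity), div_mul_cancel₀ _ hnv.ne']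
        · have := AffineSubspace.vadd_mem_of_mem_direction huV hz0A
          simpa [vadd_eq_add, add_comm] using this
      obtain ⟨q1, hq1, hdq1⟩ := happ0 _ (hball0 hub)
      obtain ⟨q0, hq0, hdq0⟩ := happ0 z0 hz0
      have hsplit : u = ((z0+u) - q1) - (z0 - q0) + (q1 - q0) := by abel
      have hq10 : Rm (q1 - q0) = 0 :=
        hRmVx _ (AffineSubspace.vsub_mem_direction
          (subset_affineSpan ℝ Kx hq1) (subset_affineSpan ℝ Kx hq0))
      have hRu : ‖Rm u‖ ≤ 2*δ0 := by
        calc ‖Rm u‖ = ‖Rm ((z0+u) - q1) - Rm (z0 - q0) + Rm (q1 - q0)‖ := by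
              rw [← map_sub, ← map_add, ← hsplit]
          _ = ‖Rm ((z0+u) - q1) - Rm (z0 - q0)‖ := by rw [hq10, add_zero]
          _ ≤ ‖Rm ((z0+u) - q1)‖ + ‖Rm (z0 - q0)‖ := norm_sub_le _ _
          _ ≤ ‖(z0+u) - q1‖ + ‖z0 - q0‖ := add_le_add (hRmnorm _) (hRmnorm _)
          _ ≤ δ0 + δ0 := by
              apply add_le_add
              · rw [← dist_eq_norm]; exact hdq1
              · rw [← dist_eq_norm]; exact hdq0
          _ = 2*δ0 := by ring
      have hveq : v = (‖v‖/ρ0) • u := by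
        rw [hu, smul_smul]
        rw [show ‖v‖/ρ0 * (ρ0/‖v‖) = 1 from by field_simp]
        rw [one_smul]
      calc ‖Rm v‖ = ‖(‖v‖/ρ0) • Rm u‖ := by rw [← _root_.map_smul, ← hveq]
        _ = ‖v‖/ρ0 * ‖Rm u‖ := by
            rw [norm_smul, Real.norm_eq_abs, abs_of_nonneg (by positivity)]
        _ ≤ ‖v‖/ρ0 * (2*δ0) := by
            apply mul_le_mul_of_nonneg_left hRu (by positivity)
        _ = ε * ‖v‖ := by rw [hε]; field_simp
  -- injectivity of the projection onto A0 restricted to Ax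
  have hfr : finrank ℝ V0 = finrank ℝ Vx := by
    rw [hV0, hVx, hA0, hAx, direction_affineSpan, direction_affineSpan]; exact hdim
  set T : V0 →ₗ[ℝ] Vx := ((Submodule.orthogonalProjection Vx).toLinearMap).comp V0.subtype with hT
  have hTv : ∀ v : V0, (T v : E) = (Submodule.orthogonalProjection Vx (v:E) : E) := fun v => rfl
  have hTinj : Function.Injective T := by
    rw [← LinearMap.ker_eq_bot, LinearMap.ker_eq_bot']
    intro v hv
    have h1 : ‖Rm (v:E)‖ ≤ ε * ‖(v:E)‖ := tilt _ (SetLike.coe_mem v)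
    have h2 : Rm (v:E) = (v:E) := by
      rw [hRmy]
      have : (T v : E) = 0 := by rw [hv]; rfl
      rw [hTv] at this
      rw [this, sub_zero]
    rw [h2] at h1
    have : ‖(v:E)‖ = 0 := by nlinarith [norm_nonneg (v:E)]
    exact Subtype.ext (norm_eq_zero.1 this)
  have hTsurj : Function.Surjective T :=
    (LinearMap.injective_iff_surjective_of_finrank_eq_finrank hfr).1 hTinj
  have hker : ∀ u ∈ Vx, (Submodule.orthogonalProjection V0 u : E) = 0 → u = 0 := by
    intro u humem h0
    have hu_orth : u ∈ V0ᗮ := by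
      have h : u - (Submodule.orthogonalProjection V0 u : E) ∈ V0ᗮ := Submodule.sub_starProjection_mem_orthogonal (K := V0) u
      rwa [h0, sub_zero] at h
    obtain ⟨v, hv⟩ := hTsurj ⟨u, humem⟩
    have hPv : (Submodule.orthogonalProjection Vx (v:E) : E) = u := by
      rw [← hTv, hv]
    have hinner0 : (inner ℝ (v:E) u : ℝ) = 0 :=
      (Submodule.mem_orthogonal V0 u).1 hu_orth _ (SetLike.coe_mem v)
    have hinner1 : (inner ℝ (v:E) u : ℝ) = ‖u‖^2 := by
      have hsplit : (v:E) = ((v:E) - (Submodule.orthogonalProjection Vx (v:E) : E))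
          + (Submodule.orthogonalProjection Vx (v:E) : E) := by abel
      rw [hsplit, inner_add_left, hPv]
      have hz : (inner ℝ ((v:E) - (Submodule.orthogonalProjection Vx (v:E) : E)) u : ℝ) = 0 := by
        rw [← hPv]
        exact (Submodule.mem_orthogonal' Vx _).1
          (Submodule.sub_starProjection_mem_orthogonal (v:E)) _ (by rw [hPv]; exact humem)
      rw [← hPv] at hz ⊢
      rw [hz, zero_add, real_inner_self_eq_norm_sq]
    have : ‖u‖^2 = 0 := by rw [← hinner1, hinner0]
    exact norm_eq_zero.1 (by nlinarith [norm_nonneg u])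
  have hprinj : ∀ q ∈ (Ax : Set E), ∀ q' ∈ (Ax : Set E),
      pr V0 z0 q = pr V0 z0 q' → q = q' := by
    intro q hq q' hq' heq
    have h1 : (Submodule.orthogonalProjection V0 (q - z0) : E) = (Submodule.orthogonalProjection V0 (q' - z0) : E) := by
      have := heq
      simp only [pr] at this
      exact add_left_cancel this
    have h2 : (Submodule.orthogonalProjection V0 (q - q') : E) = 0 := by
      rw [show q - q' = (q - z0) - (q' - z0) from by abel, map_sub]
      push_cast
      rw [h1, sub_self]
    have h3 : q - q' ∈ Vx := AffineSubspace.vsub_mem_direction hq hq'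
    exact sub_eq_zero.1 (hker _ h3 h2)
  -- project Kx onto A0, apply erosion in A0
  set D : Set E := pr V0 z0 '' Kx with hD
  have hDconv : Convex ℝ D := pr_image_convex V0 z0 hKxconv
  have hDcomp : IsCompact D := hKxcomp.image (pr_lipschitz V0 z0).continuous
  have hDA : D ⊆ (A0 : Set E) := by rintro _ ⟨q, hq, rfl⟩; exact pr_mem hz0A q
  have happD : ∀ p ∈ closedBall z0 ρ0 ∩ (A0 : Set E), ∃ q ∈ D, dist p q ≤ δ0 := by
    intro p hp
    obtain ⟨q', hq', hdq'⟩ := happ0 p (hball0 hp)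
    refine ⟨pr V0 z0 q', mem_image_of_mem _ hq', ?_⟩
    calc dist p (pr V0 z0 q') = dist (pr V0 z0 p) (pr V0 z0 q') := by
          rw [pr_eq_self hz0A hp.2]
      _ ≤ dist p q' := pr_dist_le V0 z0 p q'
      _ ≤ δ0 := hdq'
  have hero : closedBall z0 (ρ0 - δ0) ∩ (A0 : Set E) ⊆ D :=
    erosion hDconv hDcomp.isClosed hDA hz0A hδ0 happD
  have hz0D : z0 ∈ D := by
    apply hero
    refine ⟨mem_closedBall.2 ?_, hz0A⟩
    rw [dist_self]; linarith
  obtain ⟨zx, hzx, hzx_eq⟩ := hz0D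
  refine ⟨zx, hzx, ?_⟩
  rintro q ⟨hqb, hqA⟩
  have hq_img : pr V0 z0 q ∈ D := by
    apply hero
    constructor
    · rw [mem_closedBall]
      calc dist (pr V0 z0 q) z0 = dist (pr V0 z0 q) (pr V0 z0 zx) := by rw [hzx_eq]
        _ ≤ dist q zx := pr_dist_le V0 z0 q zx
        _ ≤ ρ0 - δ0 := mem_closedBall.1 hqb
    · exact pr_mem hz0A q
  obtain ⟨p, hp, hpeq⟩ := hq_img
  have : p = q := hprinj p (subset_affineSpan ℝ Kx hp) q hqA hpeq
  rwa [← this]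

variable [MeasurableSpace E] [BorelSpace E]

lemma core {k : ℕ} {Ks Ks' : Set E}
    (hK'conv : Convex ℝ Ks') (hK'comp : IsCompact Ks')
    {z : E} (hz : z ∈ Ks) {ρ δ : ℝ} (hρ : 0 < ρ) (hδ : 0 ≤ δ) (hδρ : δ ≤ ρ/2)
    (hball : closedBall z ρ ∩ ((affineSpan ℝ Ks : AffineSubspace ℝ E) : Set E) ⊆ Ks)
    (happ : ∀ p ∈ Ks, ∃ q ∈ Ks', dist p q ≤ δ) :
    ENNReal.ofReal ((1 - δ/ρ)^k) * μH[(k:ℝ)] Ks ≤ μH[(k:ℝ)] Ks' := by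
  set A : AffineSubspace ℝ E := affineSpan ℝ Ks with hA
  have hzA : z ∈ A := subset_affineSpan ℝ Ks hz
  set D : Set E := pr A.direction z '' Ks' with hD
  have hDconv : Convex ℝ D := pr_image_convex A.direction z hK'conv
  have hDcomp : IsCompact D := hK'comp.image (pr_lipschitz A.direction z).continuous
  have hDA : D ⊆ (A : Set E) := by
    rintro _ ⟨q, hq, rfl⟩; exact pr_mem hzA q
  have happD : ∀ p ∈ closedBall z ρ ∩ (A : Set E), ∃ q ∈ D, dist p q ≤ δ := by
    intro p hp
    obtain ⟨q', hq', hdq'⟩ := happ p (hball hp)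
    refine ⟨pr A.direction z q', mem_image_of_mem _ hq', ?_⟩
    calc dist p (pr A.direction z q')
        = dist (pr A.direction z p) (pr A.direction z q') := by rw [pr_eq_self hzA hp.2]
      _ ≤ dist p q' := pr_dist_le A.direction z p q'
      _ ≤ δ := hdq'
  have hero : closedBall z (ρ - δ) ∩ (A : Set E) ⊆ D :=
    erosion hDconv hDcomp.isClosed hDA hzA hδ happD
  set t : ℝ := δ / ρ with ht
  have ht0 : 0 ≤ t := div_nonneg hδ hρ.le
  have ht2 : t ≤ 1/2 := by rw [ht, div_le_iff₀ hρ]; linarith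
  have hs : (0:ℝ) < 1 - t := by linarith
  have hom : ∀ x ∈ Ks, z + (1 - t) • (x - z) ∈ D := by
    intro x hx
    have hxA : x ∈ A := subset_affineSpan ℝ Ks hx
    obtain ⟨q', hq', hdq'⟩ := happ x hx
    have hdD : pr A.direction z q' ∈ D := mem_image_of_mem _ hq'
    set d : E := pr A.direction z q' with hd
    have hdA : d ∈ A := pr_mem hzA q'
    have he_norm : ‖x - d‖ ≤ δ := by
      have h1 : ‖x - d‖ = dist (pr A.direction z x) (pr A.direction z q') := by
        rw [pr_eq_self hzA hxA, dist_eq_norm, hd]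
      rw [h1]
      exact (pr_dist_le A.direction z x q').trans hdq'
    have he_mem : x - d ∈ A.direction := AffineSubspace.vsub_mem_direction hxA hdA
    rcases eq_or_lt_of_le hδ with hδ0 | hδ0
    · -- δ = 0
      have he0 : x = d := by
        have h0 : ‖x - d‖ = 0 := le_antisymm (by rw [← hδ0] at he_norm; exact he_norm) (norm_nonneg _)
        exact sub_eq_zero.1 (norm_eq_zero.1 h0)
      have ht00 : t = 0 := by rw [ht, ← hδ0, zero_div]
      have hxx : z + ((1:ℝ) - t) • (x - z) = x := by rw [ht00]; module
      rw [hxx, he0]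
      exact hdD
    · -- δ > 0
      have htpos : 0 < t := div_pos hδ0 hρ
      set y : E := z + ((1 - t)/t) • (x - d) with hy
      have hyD : y ∈ D := by
        apply hero
        constructor
        · rw [mem_closedBall, dist_eq_norm, hy, add_sub_cancel_left, norm_smul,
            Real.norm_eq_abs, abs_of_nonneg (by positivity)]
          calc (1 - t)/t * ‖x - d‖ ≤ (1 - t)/t * δ := by
                apply mul_le_mul_of_nonneg_left he_norm (by positivity)
            _ = ρ - δ := by rw [ht]; field_simp; try ring
        · have := AffineSubspace.vadd_mem_of_mem_direction
            (A.direction.smul_mem ((1 - t)/t) he_mem) hzA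
          simpa [vadd_eq_add, add_comm] using this
      have hiden : z + (1 - t) • (x - z) = (1 - t) • d + t • y := by
        rw [hy]
        match_scalars <;> (field_simp; try ring)
      rw [hiden]
      exact hDconv hdD hyD (by linarith) ht0 (by ring)
  set c : ℝ≥0 := ‖(1 - t)⁻¹‖₊ with hc
  have hgh : ∀ x : E, z + (1-t)⁻¹ • ((z + (1 - t) • (x - z)) - z) = x := by
    intro x
    rw [add_sub_cancel_left, smul_smul, inv_mul_cancel₀ hs.ne', one_smul]
    abel
  have himg : (fun x => z + (1 - t) • (x - z)) '' Ks ⊆ D := by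
    rintro _ ⟨x, hx, rfl⟩; exact hom x hx
  have hKs_eq : (fun y => z + (1-t)⁻¹ • (y - z)) '' ((fun x => z + (1 - t) • (x - z)) '' Ks)
      = Ks := by
    rw [image_image]
    simp only [hgh]
    exact image_id Ks
  have hmeas1 : μH[(k:ℝ)] Ks
      ≤ (c : ℝ≥0∞)^(k:ℕ) * μH[(k:ℝ)] ((fun x => z + (1 - t) • (x - z)) '' Ks) := by
    have h2 := (scale_lipschitz z (1-t)⁻¹).hausdorffMeasure_image_le
      (by positivity : (0:ℝ) ≤ (k:ℝ)) ((fun x => z + (1 - t) • (x - z)) '' Ks)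
    rw [hKs_eq] at h2
    rwa [ENNReal.rpow_natCast] at h2
  have hmeas2 : μH[(k:ℝ)] ((fun x => z + (1 - t) • (x - z)) '' Ks) ≤ μH[(k:ℝ)] D :=
    measure_mono himg
  have hmeas3 : μH[(k:ℝ)] D ≤ μH[(k:ℝ)] Ks' := by
    have h3 := (pr_lipschitz A.direction z).hausdorffMeasure_image_le
      (by positivity : (0:ℝ) ≤ (k:ℝ)) Ks'
    simpa using h3
  have harith : ENNReal.ofReal ((1 - t)^k) * (c : ℝ≥0∞)^(k:ℕ) = 1 := by
    have h1 : ((c:ℝ≥0) : ℝ≥0∞) = ENNReal.ofReal ((1-t)⁻¹) := by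
      rw [hc]
      exact Real.enorm_eq_ofReal (by positivity)
    rw [h1, ENNReal.ofReal_pow hs.le, ← mul_pow, ← ENNReal.ofReal_mul hs.le,
      mul_inv_cancel₀ hs.ne', ENNReal.ofReal_one, one_pow]
  calc ENNReal.ofReal ((1 - t)^k) * μH[(k:ℝ)] Ks
      ≤ ENNReal.ofReal ((1 - t)^k)
        * ((c : ℝ≥0∞)^(k:ℕ) * μH[(k:ℝ)] ((fun x => z + (1 - t) • (x - z)) '' Ks)) :=
        mul_le_mul_right hmeas1 _
    _ = (ENNReal.ofReal ((1 - t)^k) * (c : ℝ≥0∞)^(k:ℕ))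
        * μH[(k:ℝ)] ((fun x => z + (1 - t) • (x - z)) '' Ks) := by rw [mul_assoc]
    _ = μH[(k:ℝ)] ((fun x => z + (1 - t) • (x - z)) '' Ks) := by rw [harith, one_mul]
    _ ≤ μH[(k:ℝ)] D := hmeas2
    _ ≤ μH[(k:ℝ)] Ks' := hmeas3

lemma measure_le_ball {k : ℕ} {s : Set E} {c : E} (hc : c ∈ s)
    (hdim : finrank ℝ (vectorSpan ℝ s) = k)
    {R : ℝ} (hsR : ∀ p ∈ s, dist p c ≤ R) :
    μH[(k:ℝ)] s ≤ μH[(k:ℝ)] (closedBall (0 : EuclideanSpace ℝ (Fin k)) R) := by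
  set V : Submodule ℝ E := vectorSpan ℝ s with hV
  have hfr : finrank ℝ V = k := hdim
  let e1 : V ≃ₗᵢ[ℝ] EuclideanSpace ℝ (Fin (finrank ℝ V)) := (stdOrthonormalBasis ℝ V).repr
  let e2 : EuclideanSpace ℝ (Fin (finrank ℝ V)) ≃ₗᵢ[ℝ] EuclideanSpace ℝ (Fin k) :=
    LinearIsometryEquiv.piLpCongrLeft 2 ℝ ℝ (finCongr hfr)
  set ψ : EuclideanSpace ℝ (Fin k) → E := fun w => c + ((e1.symm (e2.symm w)) : E) with hψ
  have hiso : Isometry ψ := Isometry.of_dist_eq fun w w' => by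
    rw [hψ]
    simp only [dist_eq_norm, add_sub_add_left_eq_sub]
    rw [← Submodule.coe_sub, ← map_sub, ← map_sub]
    rw [Submodule.norm_coe, e1.symm.norm_map, e2.symm.norm_map]
  have hsub : s ⊆ ψ '' (closedBall 0 R) := by
    intro p hp
    have hpV : p - c ∈ V := vsub_mem_vectorSpan ℝ hp hc
    refine ⟨e2 (e1 ⟨p - c, hpV⟩), ?_, ?_⟩
    · rw [mem_closedBall, dist_zero_right, e2.norm_map, e1.norm_map]
      calc ‖(⟨p - c, hpV⟩ : V)‖ = ‖p - c‖ := rfl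
        _ ≤ R := by rw [← dist_eq_norm]; exact hsR p hp
    · rw [hψ]
      simp only [LinearIsometryEquiv.symm_apply_apply]
      abel
  calc μH[(k:ℝ)] s ≤ μH[(k:ℝ)] (ψ '' closedBall 0 R) := measure_mono hsub
    _ = μH[(k:ℝ)] (closedBall 0 R) :=
        hiso.hausdorffMeasure_image (Or.inl (by positivity)) _

lemma ball_measure_lt_top (k : ℕ) (R : ℝ) :
    μH[(k:ℝ)] (closedBall (0 : EuclideanSpace ℝ (Fin k)) R) < ⊤ := by
  have h1 : ((k:ℕ):ℝ) = ((finrank ℝ (EuclideanSpace ℝ (Fin k)) : ℕ) : ℝ) := by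
    rw [finrank_euclideanSpace_fin]
  rw [h1]
  exact (isCompact_closedBall _ _).measure_lt_top

lemma lipschitz_of_locally {X : Type*} [MetricSpace X] [CompactSpace X] {f : X → ℝ}
    (h : ∀ x : X, ∃ C : ℝ≥0, ∃ r : ℝ, 0 < r ∧ LipschitzOnWith C f (ball x r)) :
    ∃ K : NNReal, LipschitzWith K f := by
  rcases isEmpty_or_nonempty X with hX | hX
  · exact ⟨1, LipschitzWith.of_dist_le_mul (fun x => (IsEmpty.false x).elim)⟩
  choose C r hr hlip using h
  have hloc : LocallyLipschitz f := fun x => ⟨C x, ball x (r x), ball_mem_nhds x (hr x), hlip x⟩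
  have hcont : Continuous f := hloc.continuous
  obtain ⟨B, hB⟩ := Metric.isBounded_iff.1 (isCompact_range hcont).isBounded
  obtain ⟨x0⟩ := hX
  have hB0 : 0 ≤ B := le_trans (by rw [dist_self]) (hB (mem_range_self x0) (mem_range_self x0))
  obtain ⟨t, ht⟩ := isCompact_univ.elim_finite_subcover (fun x : X => ball x (r x / 2))
    (fun x => isOpen_ball) (fun x _ => mem_iUnion.2 ⟨x, mem_ball_self (by linarith [hr x])⟩)
  have htne : t.Nonempty := by
    obtain ⟨i, hi⟩ := mem_iUnion₂.1 (ht (mem_univ x0))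
    exact ⟨i, hi.1⟩
  set ε : ℝ := t.inf' htne (fun x => r x / 2) with hεdef
  have hεpos : 0 < ε := by
    rw [hεdef, Finset.lt_inf'_iff]
    intro b _; linarith [hr b]
  set K' : ℝ := max (t.sup (fun x => C x) : ℝ≥0) (B / ε) with hK'
  have hK'0 : (0:ℝ) ≤ K' := le_max_of_le_left (NNReal.coe_nonneg _)
  have hclaim : ∀ x y : X, dist (f x) (f y) ≤ K' * dist x y := by
    intro x y
    by_cases hxy : dist x y < ε
    · obtain ⟨i, hit, hxi⟩ := mem_iUnion₂.1 (ht (mem_univ x))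
      have hεi : ε ≤ r i / 2 := Finset.inf'_le _ hit
      have hxball : x ∈ ball i (r i) := by
        rw [mem_ball] at hxi ⊢; linarith [hr i]
      have hyball : y ∈ ball i (r i) := by
        rw [mem_ball] at hxi ⊢
        calc dist y i ≤ dist y x + dist x i := dist_triangle y x i
          _ < ε + r i / 2 := by rw [dist_comm y x]; linarith
          _ ≤ r i := by linarith
      calc dist (f x) (f y) ≤ (C i : ℝ) * dist x y := (hlip i).dist_le_mul x hxball y hyball
        _ ≤ K' * dist x y := by
            apply mul_le_mul_of_nonneg_right _ dist_nonneg
            exact le_trans (by exact_mod_cast NNReal.coe_le_coe.2 (Finset.le_sup hit))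
              (le_max_left _ _)
    · push_neg at hxy
      calc dist (f x) (f y) ≤ B := hB (mem_range_self x) (mem_range_self y)
        _ = (B / ε) * ε := by field_simp
        _ ≤ (B / ε) * dist x y := by
            apply mul_le_mul_of_nonneg_left hxy (div_nonneg hB0 hεpos.le)
        _ ≤ K' * dist x y := mul_le_mul_of_nonneg_right (le_max_right _ _) dist_nonneg
  exact ⟨K'.toNNReal, LipschitzWith.of_dist_le_mul fun x y => by
    rw [Real.coe_toNNReal _ hK'0]; exact hclaim x y⟩

end KVolAux

open KVolAux

/-- if `S : X ⇉ Y ⊆ ℝ^m` is Lipschitz (w.r.t. the Hausdorff distance)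
with convex compact values of constant affine dimension `k`, then the `k`-dimensional
volume function `x ↦ λ_k(S x)` is locally Lipschitz; if moreover `X` is compact, it is
Lipschitz. -/
theorem kvolume_locally_lipschitz
    {X : Type*} [MetricSpace X] {m k : ℕ}
    (Y : Set (EuclideanSpace ℝ (Fin m)))
    (hYne : Y.Nonempty) (hYcomp : IsCompact Y) (hYconv : Convex ℝ Y)
    (S : X → Set (EuclideanSpace ℝ (Fin m)))
    (hSne : ∀ x, (S x).Nonempty) (hSconv : ∀ x, Convex ℝ (S x))
    (hScomp : ∀ x, IsCompact (S x)) (hSY : ∀ x, S x ⊆ Y)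
    (hSdim : ∀ x, Module.finrank ℝ ↥(vectorSpan ℝ (S x)) = k)
    (L : ℝ) (hL : 0 ≤ L)
    (hSlip : ∀ x x' : X, hausdorffDist (S x) (S x') ≤ L * dist x x') :
    LocallyLipschitz (fun x : X => (μH[(k : ℝ)] (S x)).toReal) ∧
    (CompactSpace X →
      ∃ K : NNReal, LipschitzWith K (fun x : X => (μH[(k : ℝ)] (S x)).toReal)) := by
  classical
  set f : X → ℝ := fun x => (μH[(k:ℝ)] (S x)).toReal with hfdef
  obtain ⟨R, hR⟩ := Metric.isBounded_iff.1 hYcomp.isBounded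
  set M : ℝ≥0∞ := μH[(k:ℝ)] (closedBall (0 : EuclideanSpace ℝ (Fin k)) R) with hM
  have hMlt : M < ⊤ := ball_measure_lt_top k R
  have hμle : ∀ x, μH[(k:ℝ)] (S x) ≤ M := by
    intro x
    obtain ⟨c, hc⟩ := hSne x
    exact measure_le_ball hc (hSdim x) (fun p hp => hR (hSY x hp) (hSY x hc))
  set M' : ℝ := M.toReal with hM'
  have hM'0 : 0 ≤ M' := ENNReal.toReal_nonneg
  have happrox : ∀ a b : X, ∀ p ∈ S a, ∃ q ∈ S b, dist p q ≤ L * dist a b := by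
    intro a b p hp
    obtain ⟨q, hq, hdq⟩ := exists_dist_le hp (hScomp a).isBounded (hScomp b) (hSne b)
    exact ⟨q, hq, hdq.trans (hSlip a b)⟩
  have key : ∀ x0 : X, ∃ C : ℝ≥0, ∃ r : ℝ, 0 < r ∧ LipschitzOnWith C f (ball x0 r) := by
    intro x0
    obtain ⟨z0, hz0⟩ := Set.Nonempty.intrinsicInterior (hSconv x0) (hSne x0)
    obtain ⟨z0', hz0'int, rfl⟩ := mem_intrinsicInterior.1 hz0
    obtain ⟨ε, hεpos, hεball⟩ := Metric.isOpen_iff.1 isOpen_interior z0' hz0'int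
    set ρ0 : ℝ := ε/2 with hρ0def
    have hρ0 : 0 < ρ0 := by positivity
    have hball0 : closedBall (↑z0' : EuclideanSpace ℝ (Fin m)) ρ0 ∩
        ((affineSpan ℝ (S x0) : AffineSubspace ℝ _) : Set _) ⊆ S x0 := by
      rintro w ⟨hwb, hwA⟩
      have hmem : (⟨w, hwA⟩ : affineSpan ℝ (S x0)) ∈ Metric.ball z0' ε := by
        rw [mem_ball, Subtype.dist_eq]
        calc dist w (↑z0' : EuclideanSpace ℝ (Fin m)) ≤ ρ0 := mem_closedBall.1 hwb
          _ < ε := by rw [hρ0def]; linarith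
      have h2 : (⟨w, hwA⟩ : affineSpan ℝ (S x0)) ∈
          (Subtype.val ⁻¹' S x0 : Set (affineSpan ℝ (S x0))) :=
        interior_subset (hεball hmem)
      exact h2
    have hz0mem : (↑z0' : EuclideanSpace ℝ (Fin m)) ∈ S x0 :=
      hball0 ⟨mem_closedBall.2 (by rw [dist_self]; exact hρ0.le), z0'.2⟩
    set r0 : ℝ := ρ0 / (8*(L+1)) with hr0def
    have hL1 : (0:ℝ) < L + 1 := by linarith
    have hr0 : 0 < r0 := by positivity
    have h8 : L * r0 ≤ ρ0/8 := by
      rw [hr0def, ← mul_div_assoc, div_le_div_iff₀ (by positivity) (by norm_num)]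
      nlinarith [hρ0.le, hL]
    set ρ : ℝ := 3*ρ0/4 with hρdef
    have hρpos : 0 < ρ := by positivity
    have hballx : ∀ x ∈ ball x0 r0, ∃ zx ∈ S x,
        closedBall zx ρ ∩ ((affineSpan ℝ (S x) : AffineSubspace ℝ _) : Set _) ⊆ S x := by
      intro x hx
      have happ0 : ∀ p ∈ S x0, ∃ q ∈ S x, dist p q ≤ ρ0/8 := by
        intro p hp
        obtain ⟨q, hq, hdq⟩ := happrox x0 x p hp
        refine ⟨q, hq, hdq.trans ?_⟩
        calc L * dist x0 x ≤ L * r0 := by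
              apply mul_le_mul_of_nonneg_left _ hL
              rw [dist_comm]; exact (mem_ball.1 hx).le
          _ ≤ ρ0/8 := h8
      obtain ⟨zx, hzx, hzxball⟩ := ball_transfer (hSconv x) (hScomp x)
        (by rw [hSdim x0, hSdim x]) hz0mem hρ0 (by positivity) (by linarith) hball0 happ0
      refine ⟨zx, hzx, fun w hw => hzxball ⟨?_, hw.2⟩⟩
      exact mem_closedBall.2 ((mem_closedBall.1 hw.1).trans (by rw [hρdef]; linarith))
    set Creal : ℝ := k * M' * L / ρ with hCreal
    have hC0 : 0 ≤ Creal :=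
      div_nonneg (mul_nonneg (mul_nonneg (Nat.cast_nonneg k) hM'0) hL) hρpos.le
    have hone : ∀ x ∈ ball x0 r0, ∀ x' ∈ ball x0 r0, f x - f x' ≤ Creal * dist x x' := by
      intro x hx x' hx'
      obtain ⟨zx, hzx, hzxball⟩ := hballx x hx
      set δ : ℝ := L * dist x x' with hδdef
      have hδ0 : 0 ≤ δ := mul_nonneg hL dist_nonneg
      have hδρ : δ ≤ ρ/2 := by
        have hdxx : dist x x' ≤ 2*r0 := by
          calc dist x x' ≤ dist x x0 + dist x0 x' := dist_triangle _ _ _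
            _ ≤ r0 + r0 := add_le_add (mem_ball.1 hx).le
                (by rw [dist_comm]; exact (mem_ball.1 hx').le)
            _ = 2*r0 := by ring
        calc δ ≤ L * (2*r0) := mul_le_mul_of_nonneg_left hdxx hL
          _ = 2*(L*r0) := by ring
          _ ≤ 2*(ρ0/8) := by linarith
          _ ≤ ρ/2 := by rw [hρdef]; linarith
      have hcore := core (k := k) (hSconv x') (hScomp x') hzx hρpos hδ0 hδρ hzxball (happrox x x')
      have hfinx' : μH[(k:ℝ)] (S x') ≠ ⊤ := (lt_of_le_of_lt (hμle x') hMlt).ne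
      set t : ℝ := δ/ρ with htdef
      have ht0 : 0 ≤ t := div_nonneg hδ0 hρpos.le
      have ht1 : t ≤ 1/2 := by rw [htdef, div_le_iff₀ hρpos]; linarith
      have hbk : (0:ℝ) ≤ (1 - t)^k := pow_nonneg (by linarith) k
      have htoReal : (1 - t)^k * f x ≤ f x' := by
        have h := ENNReal.toReal_mono hfinx' hcore
        rwa [ENNReal.toReal_mul, ENNReal.toReal_ofReal hbk] at h
      have hbern : 1 - (k:ℝ)*t ≤ (1 - t)^k := by
        have hb := one_add_mul_le_pow (a := -t) (by linarith) k
        calc 1 - (k:ℝ)*t = 1 + (k:ℝ)*(-t) := by ring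
          _ ≤ (1 + -t)^k := hb
          _ = (1-t)^k := by ring_nf
      have hfxM : f x ≤ M' := ENNReal.toReal_mono hMlt.ne (hμle x)
      have hfx0 : 0 ≤ f x := ENNReal.toReal_nonneg
      have step1 : (1 - (k:ℝ)*t) * f x ≤ (1-t)^k * f x := mul_le_mul_of_nonneg_right hbern hfx0
      have step2 : f x - f x' ≤ (k:ℝ)*t*f x := by nlinarith [htoReal, step1]
      have step3 : (k:ℝ)*t*f x ≤ (k:ℝ)*t*M' :=
        mul_le_mul_of_nonneg_left hfxM (mul_nonneg (Nat.cast_nonneg k) ht0)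
      calc f x - f x' ≤ (k:ℝ)*t*M' := step2.trans step3
        _ = Creal * dist x x' := by
            rw [hCreal, htdef, hδdef]
            field_simp
    refine ⟨Creal.toNNReal, r0, hr0, LipschitzOnWith.of_dist_le_mul fun x hx y hy => ?_⟩
    rw [Real.coe_toNNReal _ hC0, Real.dist_eq, abs_sub_le_iff]
    constructor
    · exact (hone x hx y hy)
    · rw [dist_comm]; exact hone y hy x hx
  constructor
  · intro x0
    obtain ⟨C, r, hrpos, hlip⟩ := key x0
    exact ⟨C, ball x0 r, ball_mem_nhds x0 hrpos, hlip⟩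
  · intro hcomp
    exact lipschitz_of_locally key
end

section
/- Let U be a real m × q matrix and, for w ∈ ℝ^m, set F(w) := { y ∈ ℝ^q : Uy ≤ w } (componentwise inequality). For every k ∈ ℕ there exists a constant H(U,k) > 0, depending only on U and k, such that for every collection w_1,…,w_k ∈ ℝ^m with ∩_{i=1}^k F(w_i) ≠ ∅, one has d(y, ∩_{i=1}^k F(w_i)) ≤ H(U,k) · max_{i∈[k]} d(y, F(w_i)) for all y ∈ ℝ^q. -/
open Metric Set

section HoffmanAux

open Finset
open scoped RealInnerProductSpace

variable {q m : ℕ}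
local notation "E" => EuclideanSpace ℝ (Fin q)

private noncomputable def coneMap (a : Fin m → E) (J : Finset (Fin m)) : (J → ℝ) →ₗ[ℝ] E where
  toFun := fun g => ∑ j : J, g j • a j
  map_add' := by intro g h; simp [add_smul, Finset.sum_add_distrib]
  map_smul' := by intro c g; simp [smul_smul, Finset.smul_sum]

private lemma coneMap_eq (a : Fin m → E) (J : Finset (Fin m)) (lam : Fin m → ℝ)
    (hsupp : ∀ j ∉ J, lam j = 0) :
    ∑ j, lam j • a j = coneMap a J (fun j => lam j) := by
  have h1 : coneMap a J (fun j => lam j) = ∑ j ∈ J, lam j • a j :=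
    Finset.sum_coe_sort J (fun j => lam j • a j)
  rw [h1]
  exact (Finset.sum_subset (Finset.subset_univ J) (by
    intro x _ hx; rw [hsupp x hx, zero_smul])).symm

lemma exists_cone_const (a : Fin m → E) (J : Finset (Fin m)) :
    ∃ c : ℝ, 0 ≤ c ∧ (LinearIndependent ℝ (fun j : J => a j) →
      ∀ lam : Fin m → ℝ, (∀ j, 0 ≤ lam j) → (∀ j ∉ J, lam j = 0) →
        ∑ j, lam j ≤ c * ‖∑ j, lam j • a j‖) := by
  by_cases hLI : LinearIndependent ℝ (fun j : J => a j)
  · have hker : LinearMap.ker (coneMap a J) = ⊥ := by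
      rw [LinearMap.ker_eq_bot']
      intro g hg
      have := Fintype.linearIndependent_iff.mp hLI g hg
      funext j; exact this j
    obtain ⟨K, hK0, hK⟩ := (coneMap a J).exists_antilipschitzWith hker
    refine ⟨(J.card : ℝ) * K, by positivity, fun _ lam hlam hsupp => ?_⟩
    set g : J → ℝ := fun j => lam j with hg
    have hsum1 : ∑ j, lam j • a j = coneMap a J g := coneMap_eq a J lam hsupp
    have hsum2 : ∑ j, lam j = ∑ j : J, g j := by
      have h1 : ∑ j : J, g j = ∑ j ∈ J, lam j := Finset.sum_coe_sort J (fun j => lam j)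
      rw [h1]
      exact (Finset.sum_subset (Finset.subset_univ J) (fun x _ hx => hsupp x hx)).symm
    have hle : ‖g‖ ≤ K * ‖coneMap a J g‖ := by
      have := hK.le_mul_dist g 0
      simpa [dist_zero_right, map_zero] using this
    have hgj : ∀ j : J, g j ≤ ‖g‖ := fun j =>
      (le_abs_self _).trans (norm_le_pi_norm g j)
    have hKnn : (0:ℝ) ≤ K := K.coe_nonneg
    calc ∑ j, lam j = ∑ j : J, g j := hsum2
      _ ≤ ∑ _j : J, ‖g‖ := Finset.sum_le_sum (fun j _ => hgj j)
      _ = (J.card : ℝ) * ‖g‖ := by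
          simp [Finset.card_univ]
      _ ≤ (J.card : ℝ) * (K * ‖coneMap a J g‖) :=
          mul_le_mul_of_nonneg_left hle (Nat.cast_nonneg _)
      _ = (J.card : ℝ) * K * ‖∑ j, lam j • a j‖ := by rw [hsum1, mul_assoc]
  · exact ⟨0, le_rfl, fun h => absurd h hLI⟩

lemma cone_caratheodory (a : Fin m → E) (s : Finset (Fin m)) :
    ∀ lam : Fin m → ℝ, (∀ j, 0 ≤ lam j) → (∀ j ∉ s, lam j = 0) →
    ∃ (J : Finset (Fin m)) (mu : Fin m → ℝ), J ⊆ s ∧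
      LinearIndependent ℝ (fun j : J => a j) ∧
      (∀ j, 0 ≤ mu j) ∧ (∀ j ∉ J, mu j = 0) ∧
      ∑ j, mu j • a j = ∑ j, lam j • a j := by
  classical
  induction s using Finset.strongInduction with
  | _ s ih =>
    intro lam hlam hsupp
    by_cases hLI : LinearIndependent ℝ (fun j : s => a j)
    · exact ⟨s, lam, subset_rfl, hLI, hlam, hsupp, rfl⟩
    · obtain ⟨g, hg0, i₀, hgi₀⟩ := Fintype.not_linearIndependent_iff.mp hLI
      set c : Fin m → ℝ := fun j => if h : j ∈ s then g ⟨j, h⟩ else 0 with hc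
      have hcsupp : ∀ j ∉ s, c j = 0 := fun j hj => by simp [hc, hj]
      have hcsum : ∑ j, c j • a j = 0 := by
        have h1 : ∑ j, c j • a j = ∑ j ∈ s, c j • a j :=
          (Finset.sum_subset (Finset.subset_univ s)
            (fun x _ hx => by rw [hcsupp x hx, zero_smul])).symm
        have h2 : ∑ j ∈ s, c j • a j = ∑ j : s, g j • a j := by
          rw [← Finset.sum_coe_sort s (fun j => c j • a j)]
          exact Finset.sum_congr rfl (fun j _ => by simp [hc, j.2])
        rw [h1, h2, hg0]
      have key : ∀ c : Fin m → ℝ, (∀ j ∉ s, c j = 0) → (∑ j, c j • a j = 0) →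
          (∃ j ∈ s, 0 < c j) →
          ∃ (J : Finset (Fin m)) (mu : Fin m → ℝ), J ⊆ s ∧
            LinearIndependent ℝ (fun j : J => a j) ∧
            (∀ j, 0 ≤ mu j) ∧ (∀ j ∉ J, mu j = 0) ∧
            ∑ j, mu j • a j = ∑ j, lam j • a j := by
        intro c hcsupp hcsum hcpos
        set P : Finset (Fin m) := s.filter (fun j => 0 < c j) with hP
        have hPne : P.Nonempty := by
          obtain ⟨j, hj, hjc⟩ := hcpos
          exact ⟨j, Finset.mem_filter.mpr ⟨hj, hjc⟩⟩
        obtain ⟨j₀, hj₀P, hj₀⟩ := Finset.exists_mem_eq_inf' hPne (fun j => lam j / c j)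
        have hj₀s : j₀ ∈ s := (Finset.mem_filter.mp hj₀P).1
        have hj₀c : 0 < c j₀ := (Finset.mem_filter.mp hj₀P).2
        set r : ℝ := P.inf' hPne (fun j => lam j / c j) with hr
        have hrval : r = lam j₀ / c j₀ := hj₀
        have hr0 : 0 ≤ r := by
          rw [hrval]; exact div_nonneg (hlam j₀) hj₀c.le
        set mu : Fin m → ℝ := fun j => lam j - r * c j with hmu
        have hmu0 : ∀ j, 0 ≤ mu j := by
          intro j
          by_cases hjc : 0 < c j
          · by_cases hjs : j ∈ s
            · have hjP : j ∈ P := Finset.mem_filter.mpr ⟨hjs, hjc⟩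
              have h3 : r ≤ lam j / c j := Finset.inf'_le _ hjP
              have h4 : r * c j ≤ lam j := (le_div_iff₀ hjc).mp h3
              simp only [hmu]; linarith
            · exfalso
              rw [hcsupp j hjs] at hjc; exact lt_irrefl 0 hjc
          · push_neg at hjc
            have : 0 ≤ -(r * c j) := by nlinarith
            simp only [hmu]; linarith [hlam j]
        have hmuj₀ : mu j₀ = 0 := by
          simp only [hmu, hrval]
          field_simp
          ring
        have hmusupp : ∀ j ∉ s.erase j₀, mu j = 0 := by
          intro j hj
          by_cases hjj : j = j₀
          · rw [hjj]; exact hmuj₀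
          · have hjs : j ∉ s := fun hjs => hj (Finset.mem_erase.mpr ⟨hjj, hjs⟩)
            simp [hmu, hsupp j hjs, hcsupp j hjs]
        have hmusum : ∑ j, mu j • a j = ∑ j, lam j • a j := by
          simp only [hmu, sub_smul, Finset.sum_sub_distrib, mul_smul]
          rw [← Finset.smul_sum, hcsum, smul_zero, sub_zero]
        obtain ⟨J, nu, hJsub, hJLI, hnu0, hnusupp, hnusum⟩ :=
          ih (s.erase j₀) (Finset.erase_ssubset hj₀s) mu hmu0 hmusupp
        exact ⟨J, nu, hJsub.trans (Finset.erase_subset _ _), hJLI, hnu0, hnusupp,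
          hnusum.trans hmusum⟩
      by_cases hpos : ∃ j ∈ s, 0 < c j
      · exact key c hcsupp hcsum hpos
      · push_neg at hpos
        refine key (fun j => -c j) (fun j hj => by simp [hcsupp j hj])
          (by simp only [neg_smul, Finset.sum_neg_distrib, hcsum, neg_zero]) ?_
        have hci₀ : c (i₀ : Fin m) ≠ 0 := by simpa [hc, i₀.2] using hgi₀
        refine ⟨i₀, i₀.2, ?_⟩
        show 0 < -c (i₀ : Fin m)
        rcases (hpos i₀ i₀.2).lt_or_eq with h | h
        · linarith
        · exact absurd h hci₀

lemma cone_isClosed (a : Fin m → E) (s : Finset (Fin m)) :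
    IsClosed {x : E | ∃ lam : Fin m → ℝ, (∀ j, 0 ≤ lam j) ∧ (∀ j ∉ s, lam j = 0) ∧
      x = ∑ j, lam j • a j} := by
  classical
  have hset : {x : E | ∃ lam : Fin m → ℝ, (∀ j, 0 ≤ lam j) ∧ (∀ j ∉ s, lam j = 0) ∧
      x = ∑ j, lam j • a j} = ⋃ J : Finset (Fin m),
      {x : E | (J ⊆ s ∧ LinearIndependent ℝ (fun j : J => a j)) ∧
        ∃ lam : Fin m → ℝ, (∀ j, 0 ≤ lam j) ∧ (∀ j ∉ J, lam j = 0) ∧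
          x = ∑ j, lam j • a j} := by
    ext x
    simp only [mem_setOf_eq, mem_iUnion]
    constructor
    · rintro ⟨lam, h0, hs, rfl⟩
      obtain ⟨J, mu, hJs, hLI, hmu0, hmus, hmusum⟩ := cone_caratheodory a s lam h0 hs
      exact ⟨J, ⟨hJs, hLI⟩, mu, hmu0, hmus, hmusum.symm⟩
    · rintro ⟨J, ⟨hJs, -⟩, lam, h0, hsuppJ, rfl⟩
      exact ⟨lam, h0, fun j hj => hsuppJ j (fun hjJ => hj (hJs hjJ)), rfl⟩
  rw [hset]
  apply isClosed_iUnion_of_finite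
  intro J
  by_cases hJ : J ⊆ s ∧ LinearIndependent ℝ (fun j : J => a j)
  · have himg : {x : E | (J ⊆ s ∧ LinearIndependent ℝ (fun j : J => a j)) ∧
        ∃ lam : Fin m → ℝ, (∀ j, 0 ≤ lam j) ∧ (∀ j ∉ J, lam j = 0) ∧
          x = ∑ j, lam j • a j} =
        (coneMap a J) '' {g : J → ℝ | ∀ j, 0 ≤ g j} := by
      ext x
      constructor
      · rintro ⟨-, lam, h0, hsuppJ, rfl⟩
        exact ⟨fun j => lam j, fun j => h0 j, (coneMap_eq a J lam hsuppJ).symm⟩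
      · rintro ⟨g, hg, rfl⟩
        set lam : Fin m → ℝ := fun j => if h : j ∈ J then g ⟨j, h⟩ else 0 with hlam
        have hsuppJ : ∀ j ∉ J, lam j = 0 := fun j hj => by simp [hlam, hj]
        refine ⟨hJ, lam, fun j => ?_, hsuppJ, ?_⟩
        · by_cases h : j ∈ J
          · simpa [hlam, h] using hg ⟨j, h⟩
          · simp [hlam, h]
        · rw [coneMap_eq a J lam hsuppJ]
          congr 1
          funext j
          simp [hlam, j.2]
    rw [himg]
    have hker : LinearMap.ker (coneMap a J) = ⊥ := by
      rw [LinearMap.ker_eq_bot']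
      intro g hg
      have := Fintype.linearIndependent_iff.mp hJ.2 g hg
      funext j; exact this j
    obtain ⟨K, hK0, hK⟩ := (coneMap a J).exists_antilipschitzWith hker
    have huc : UniformContinuous ⇑(coneMap a J) := by
      have h := (LinearMap.toContinuousLinearMap (coneMap a J)).uniformContinuous
      rwa [LinearMap.coe_toContinuousLinearMap'] at h
    have hcl : IsClosed {g : J → ℝ | ∀ j, 0 ≤ g j} := by
      have h2 : {g : J → ℝ | ∀ j, 0 ≤ g j} = ⋂ j, {g : J → ℝ | 0 ≤ g j} := by
        ext g; simp [Set.mem_iInter]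
      rw [h2]
      exact isClosed_iInter fun j => isClosed_le continuous_const (continuous_apply j)
    exact (hK.isClosedEmbedding huc).isClosedMap _ hcl
  · have : {x : E | (J ⊆ s ∧ LinearIndependent ℝ (fun j : J => a j)) ∧
        ∃ lam : Fin m → ℝ, (∀ j, 0 ≤ lam j) ∧ (∀ j ∉ J, lam j = 0) ∧
          x = ∑ j, lam j • a j} = ∅ := by
      ext x; simp only [mem_setOf_eq, mem_empty_iff_false, iff_false]
      rintro ⟨h, -⟩; exact hJ h
    rw [this]; exact isClosed_empty

private noncomputable def polyCone (a : Fin m → E) (s : Finset (Fin m)) : ConvexCone ℝ E where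
  carrier := {x : E | ∃ lam : Fin m → ℝ, (∀ j, 0 ≤ lam j) ∧ (∀ j ∉ s, lam j = 0) ∧
      x = ∑ j, lam j • a j}
  smul_mem' := by
    rintro t ht x ⟨lam, h0, hs, rfl⟩
    refine ⟨fun j => t * lam j, fun j => mul_nonneg ht.le (h0 j),
      fun j hj => by simp [hs j hj], ?_⟩
    simp only [Finset.smul_sum, smul_smul]
  add_mem' := by
    rintro x ⟨lam, hl0, hls, rfl⟩ z ⟨mu, hm0, hms, rfl⟩
    refine ⟨fun j => lam j + mu j, fun j => add_nonneg (hl0 j) (hm0 j),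
      fun j hj => by simp [hls j hj, hms j hj], ?_⟩
    simp only [add_smul, Finset.sum_add_distrib]

lemma hoffman_core (a : Fin m → E) :
    ∃ C : ℝ, 0 < C ∧ ∀ w : Fin m → ℝ, {y : E | ∀ j, ⟪a j, y⟫ ≤ w j}.Nonempty →
      ∀ y : E, infDist y {y' : E | ∀ j, ⟪a j, y'⟫ ≤ w j} ≤
        C * ∑ j, max (⟪a j, y⟫ - w j) 0 := by
  classical
  choose c hc0 hc using fun J : Finset (Fin m) => exists_cone_const a J
  have hsumc : 0 ≤ ∑ J : Finset (Fin m), c J := Finset.sum_nonneg fun J _ => hc0 J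
  refine ⟨1 + ∑ J, c J, by linarith, fun w hne y => ?_⟩
  set C : ℝ := 1 + ∑ J : Finset (Fin m), c J with hCdef
  have hC : 0 < C := by rw [hCdef]; linarith
  have hCge : ∀ J, c J ≤ C := fun J => by
    have h1 : c J ≤ ∑ J' : Finset (Fin m), c J' :=
      Finset.single_le_sum (fun J' _ => hc0 J') (Finset.mem_univ J)
    linarith
  set R : ℝ := ∑ j, max (⟪a j, y⟫ - w j) 0 with hRdef
  have hR0 : 0 ≤ R := Finset.sum_nonneg fun j _ => le_max_right _ _
  set Kset := {y' : E | ∀ j, ⟪a j, y'⟫ ≤ w j} with hKdef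
  have hclosed : IsClosed Kset := by
    have h2 : Kset = ⋂ j, {y' : E | ⟪a j, y'⟫ ≤ w j} := by
      ext z; simp [hKdef, Set.mem_iInter]
    rw [h2]
    exact isClosed_iInter fun j =>
      isClosed_le (Continuous.inner continuous_const continuous_id) continuous_const
  have hconv : Convex ℝ Kset := by
    intro x hx z hz α β hα hβ hαβ j
    have hx' := hx j
    have hz' := hz j
    have : ⟪a j, α • x + β • z⟫ = α * ⟪a j, x⟫ + β * ⟪a j, z⟫ := by
      rw [inner_add_right, real_inner_smul_right, real_inner_smul_right]
    rw [this]
    have h1 : α * ⟪a j, x⟫ ≤ α * w j := mul_le_mul_of_nonneg_left hx' hα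
    have h2 : β * ⟪a j, z⟫ ≤ β * w j := mul_le_mul_of_nonneg_left hz' hβ
    have h3 : α * w j + β * w j = w j := by rw [← add_mul, hαβ, one_mul]
    linarith
  obtain ⟨p, hpK, hp⟩ := hclosed.exists_infDist_eq_dist hne y
  haveI : Nonempty Kset := ⟨⟨p, hpK⟩⟩
  have hiInf : ‖y - p‖ = ⨅ z : Kset, ‖y - z‖ := by
    apply le_antisymm
    · apply le_ciInf
      intro z
      have h3 : dist y p ≤ dist y (z:E) := by
        rw [← hp]; exact infDist_le_dist_of_mem z.2
      rw [← dist_eq_norm, ← dist_eq_norm]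
      exact h3
    · exact ciInf_le ⟨0, fun b hb => by obtain ⟨z, rfl⟩ := hb; exact norm_nonneg _⟩
        (⟨p, hpK⟩ : Kset)
  have hvar : ∀ z ∈ Kset, ⟪y - p, z - p⟫ ≤ 0 :=
    (norm_eq_iInf_iff_real_inner_le_zero hconv hpK).mp hiInf
  set v : E := y - p with hvdef
  set s : Finset (Fin m) := Finset.univ.filter (fun j => ⟪a j, p⟫ = w j) with hsdef
  -- Farkas: v lies in the cone generated by the active rows
  have hcone_ne : ((polyCone a s : Set E)).Nonempty :=
    ⟨0, fun j => 0, fun j => le_rfl, fun j _ => rfl, by simp⟩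
  have hcone_cl : IsClosed ((polyCone a s : Set E)) := cone_isClosed a s
  have hvN : v ∈ polyCone a s := by
    have key : ∀ x₀ : E, x₀ ∉ (polyCone a s : Set E) →
        ∃ d, (∀ x ∈ polyCone a s, 0 ≤ ⟪x, d⟫) ∧ ⟪x₀, d⟫ < 0 := by
      intro x₀ hx₀
      let C : ProperCone ℝ E :=
        { carrier := (polyCone a s : Set E)
          add_mem' := fun hx hy => (polyCone a s).add_mem hx hy
          zero_mem' := ⟨fun j => 0, fun j => le_rfl, fun j _ => rfl, by simp⟩
          smul_mem' := by
            rintro c x ⟨lam, h0, hs, rfl⟩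
            refine ⟨fun j => (c : ℝ) * lam j, fun j => mul_nonneg c.2 (h0 j),
              fun j hj => by simp [hs j hj], ?_⟩
            rw [Finset.smul_sum]
            refine Finset.sum_congr rfl fun j _ => ?_
            rw [mul_smul]
            rfl
          isClosed' := hcone_cl }
      obtain ⟨d, h1, h2⟩ := C.hyperplane_separation' (x₀ := x₀) hx₀
      exact ⟨d, fun x hx => h1 x hx, h2⟩
    by_contra hvn
    obtain ⟨d, hd, hdv⟩ := key v hvn
    suffices hsuff : 0 ≤ ⟪d, v⟫ by linarith [real_inner_comm d v]
    -- d satisfies 0 ≤ ⟪a j, d⟫ for active j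
    have hdj : ∀ j ∈ s, (0:ℝ) ≤ ⟪a j, d⟫ := by
      intro j hj
      apply hd
      refine ⟨fun l => if l = j then 1 else 0,
        fun l => by by_cases hl : l = j <;> simp [hl],
        fun l hl => if_neg (fun (h : l = j) => hl (h.symm ▸ hj)), ?_⟩
      simp [ite_smul]
    set e : E := -d with hedef
    -- step size
    set h : Fin m → ℝ := fun j => if ⟪a j, p⟫ = w j ∨ ⟪a j, e⟫ ≤ 0 then 1
      else (w j - ⟪a j, p⟫) / ⟪a j, e⟫ with hhdef
    set tset : Finset ℝ := insert (1:ℝ) (Finset.univ.image h) with htsetdef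
    have htne : tset.Nonempty := ⟨1, Finset.mem_insert_self _ _⟩
    set t : ℝ := tset.min' htne with htdef
    have ht1 : t ≤ 1 := Finset.min'_le _ _ (Finset.mem_insert_self _ _)
    have htj : ∀ j, t ≤ h j := fun j => Finset.min'_le _ _
      (Finset.mem_insert_of_mem (Finset.mem_image_of_mem h (Finset.mem_univ j)))
    have ht0 : 0 < t := by
      have hmem := Finset.min'_mem tset htne
      rw [← htdef] at hmem
      rcases Finset.mem_insert.mp hmem with h1 | h1
      · rw [h1]; exact one_pos
      · obtain ⟨j, -, hj⟩ := Finset.mem_image.mp h1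
        rw [← hj]
        by_cases hcase : ⟪a j, p⟫ = w j ∨ ⟪a j, e⟫ ≤ 0
        · simp only [hhdef]
          rw [if_pos hcase]; exact one_pos
        · simp only [hhdef]
          rw [if_neg hcase]
          push_neg at hcase
          have hlt : ⟪a j, p⟫ < w j := lt_of_le_of_ne (hpK j) hcase.1
          exact div_pos (by linarith) hcase.2
    have hzK : p + t • e ∈ Kset := by
      intro j
      have hinner : ⟪a j, p + t • e⟫ = ⟪a j, p⟫ + t * ⟪a j, e⟫ := by
        rw [inner_add_right, real_inner_smul_right]
      rw [hinner]
      by_cases hact : ⟪a j, p⟫ = w j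
      · have h4 : (0:ℝ) ≤ ⟪a j, d⟫ :=
          hdj j (Finset.mem_filter.mpr ⟨Finset.mem_univ j, hact⟩)
        have h5 : ⟪a j, e⟫ ≤ 0 := by
          rw [hedef, inner_neg_right]; linarith
        nlinarith
      · by_cases hpos : ⟪a j, e⟫ ≤ 0
        · have := hpK j
          nlinarith
        · push_neg at hpos
          have h6 : t ≤ (w j - ⟪a j, p⟫) / ⟪a j, e⟫ := by
            have h5 := htj j
            simp only [hhdef] at h5
            rwa [if_neg (not_or.mpr ⟨hact, not_le.mpr hpos⟩)] at h5
          have h7 : t * ⟪a j, e⟫ ≤ w j - ⟪a j, p⟫ := (le_div_iff₀ hpos).mp h6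
          linarith
    have h8 := hvar _ hzK
    have h9 : p + t • e - p = t • e := by abel
    rw [h9, real_inner_smul_right] at h8
    have h10 : ⟪v, e⟫ ≤ (0:ℝ) := (mul_le_mul_iff_right₀ ht0).mp (by rw [mul_zero]; exact h8)
    have h11 : (0:ℝ) ≤ ⟪v, d⟫ := by
      rw [hedef, inner_neg_right] at h10; linarith
    rw [real_inner_comm]
    exact h11
  obtain ⟨lam, hlam0, hlamsupp, hveq⟩ := hvN
  obtain ⟨J, mu, hJs, hLI, hmu0, hmusupp, hmusum⟩ := cone_caratheodory a s lam hlam0 hlamsupp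
  have hveq' : v = ∑ j, mu j • a j := by rw [hmusum, ← hveq]
  have hinner : ⟪v, v⟫ = ∑ j, mu j * ⟪a j, v⟫ := by
    nth_rewrite 1 [hveq']
    rw [sum_inner]
    exact Finset.sum_congr rfl fun j _ => real_inner_smul_left _ _ _
  have hμsum0 : 0 ≤ ∑ i, mu i := Finset.sum_nonneg fun i _ => hmu0 i
  have hterm : ∀ j, mu j * ⟪a j, v⟫ ≤ (∑ i, mu i) * max (⟪a j, y⟫ - w j) 0 := by
    intro j
    by_cases hmuj : mu j = 0
    · rw [hmuj, zero_mul]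
      exact mul_nonneg hμsum0 (le_max_right _ _)
    · have hjJ : j ∈ J := by
        by_contra hjJ
        exact hmuj (hmusupp j hjJ)
      have hjs : j ∈ s := hJs hjJ
      have hact : ⟪a j, p⟫ = w j := (Finset.mem_filter.mp hjs).2
      have h11 : ⟪a j, v⟫ = ⟪a j, y⟫ - w j := by
        rw [hvdef, inner_sub_right, hact]
      rw [h11]
      calc mu j * (⟪a j, y⟫ - w j) ≤ mu j * max (⟪a j, y⟫ - w j) 0 :=
            mul_le_mul_of_nonneg_left (le_max_left _ _) (hmu0 j)
        _ ≤ (∑ i, mu i) * max (⟪a j, y⟫ - w j) 0 :=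
            mul_le_mul_of_nonneg_right
              (Finset.single_le_sum (fun i _ => hmu0 i) (Finset.mem_univ j))
              (le_max_right _ _)
  have hnormsq : ‖v‖ ^ 2 ≤ (∑ i, mu i) * R := by
    rw [← real_inner_self_eq_norm_sq, hinner, hRdef, Finset.mul_sum]
    exact Finset.sum_le_sum fun j _ => hterm j
  have hsummu : ∑ i, mu i ≤ C * ‖v‖ := by
    have h12 := hc J hLI mu hmu0 hmusupp
    rw [← hveq'] at h12
    calc ∑ i, mu i ≤ c J * ‖v‖ := h12
      _ ≤ C * ‖v‖ := mul_le_mul_of_nonneg_right (hCge J) (norm_nonneg v)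
  have hdist : infDist y Kset = ‖v‖ := by rw [hp, dist_eq_norm]
  rw [hdist]
  by_cases hv0 : ‖v‖ = 0
  · rw [hv0]; exact mul_nonneg hC.le hR0
  · have hv0' : 0 < ‖v‖ := lt_of_le_of_ne (norm_nonneg v) (Ne.symm hv0)
    nlinarith [mul_le_mul_of_nonneg_right hsummu hR0, hnormsq, hv0']

end HoffmanAux

open Finset in
open scoped RealInnerProductSpace in
/-- uniform Hoffman bound for intersections. For a matrix `U` and
`F(w) = {y : Uy ≤ w}`, for every `k` there is a constant `H(U,k) > 0` such that whenever
`⋂_{i} F(w_i)` is nonempty, the distance to the intersection is controlled by `H(U,k)`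
times the maximum of the distances to the individual sets. -/
theorem hoffman_uniform_intersection
    {m q : ℕ} (U : Matrix (Fin m) (Fin q) ℝ) (k : ℕ) :
    ∃ H : ℝ, 0 < H ∧
      ∀ w : Fin k → (Fin m → ℝ),
        (⋂ i : Fin k, {y : EuclideanSpace ℝ (Fin q) |
            ∀ j : Fin m, (∑ l : Fin q, U j l * y l) ≤ w i j}).Nonempty →
        ∀ y : EuclideanSpace ℝ (Fin q),
          Metric.infDist y (⋂ i : Fin k, {y' : EuclideanSpace ℝ (Fin q) |
              ∀ j : Fin m, (∑ l : Fin q, U j l * y' l) ≤ w i j}) ≤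
            H * ⨆ i : Fin k, Metric.infDist y {y' : EuclideanSpace ℝ (Fin q) |
              ∀ j : Fin m, (∑ l : Fin q, U j l * y' l) ≤ w i j} := by
  classical
  rcases isEmpty_or_nonempty (Fin k) with hk | hk
  · haveI : IsEmpty (Fin k) := hk
    refine ⟨1, one_pos, fun w hne y => ?_⟩
    rw [Set.iInter_of_empty, iSup, Set.range_eq_empty, Real.sSup_empty, mul_zero]
    rw [Metric.infDist_zero_of_mem (Set.mem_univ y)]
  · set a : Fin m → EuclideanSpace ℝ (Fin q) := fun j => WithLp.toLp 2 (fun l => U j l) with hadef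
    have hSeq : ∀ ww : Fin m → ℝ, {y' : EuclideanSpace ℝ (Fin q) |
        ∀ j : Fin m, (∑ l : Fin q, U j l * y' l) ≤ ww j} =
        {y' : EuclideanSpace ℝ (Fin q) | ∀ j, ⟪a j, y'⟫ ≤ ww j} := by
      intro ww
      ext z
      simp [hadef, PiLp.inner_apply, RCLike.inner_apply, conj_trivial, mul_comm]
    obtain ⟨C, hC, hCbound⟩ := hoffman_core a
    have hA0 : (0:ℝ) ≤ ∑ j, ‖a j‖ := Finset.sum_nonneg fun j _ => norm_nonneg _
    refine ⟨C * (∑ j, ‖a j‖) + 1, by nlinarith, fun w hne y => ?_⟩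
    simp only [hSeq] at hne ⊢
    set w' : Fin m → ℝ := fun j => Finset.univ.inf' Finset.univ_nonempty (fun i => w i j)
      with hw'def
    have hInter : (⋂ i : Fin k, {y' : EuclideanSpace ℝ (Fin q) | ∀ j, ⟪a j, y'⟫ ≤ w i j}) =
        {y' : EuclideanSpace ℝ (Fin q) | ∀ j, ⟪a j, y'⟫ ≤ w' j} := by
      ext z
      simp only [Set.mem_iInter, Set.mem_setOf_eq]
      constructor
      · intro hz j
        rw [hw'def, Finset.le_inf'_iff]
        intro i _
        exact hz i j
      · intro hz i j
        refine le_trans (hz j) ?_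
        rw [hw'def]
        exact Finset.inf'_le _ (Finset.mem_univ i)
    rw [hInter] at hne ⊢
    have hmain := hCbound w' hne y
    -- the sets F(w i) are nonempty and closed
    have hFne : ∀ i : Fin k, {y' : EuclideanSpace ℝ (Fin q) | ∀ j, ⟪a j, y'⟫ ≤ w i j}.Nonempty := by
      intro i
      obtain ⟨x0, hx0⟩ := hne
      exact ⟨x0, fun j => le_trans (hx0 j) (Finset.inf'_le _ (Finset.mem_univ i))⟩
    have hFcl : ∀ i : Fin k, IsClosed {y' : EuclideanSpace ℝ (Fin q) | ∀ j, ⟪a j, y'⟫ ≤ w i j} := by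
      intro i
      have h2 : {y' : EuclideanSpace ℝ (Fin q) | ∀ j, ⟪a j, y'⟫ ≤ w i j} =
          ⋂ j, {y' : EuclideanSpace ℝ (Fin q) | ⟪a j, y'⟫ ≤ w i j} := by
        ext z; simp [Set.mem_iInter]
      rw [h2]
      exact isClosed_iInter fun j =>
        isClosed_le (Continuous.inner continuous_const continuous_id) continuous_const
    set Sup : ℝ := ⨆ i : Fin k, infDist y {y' : EuclideanSpace ℝ (Fin q) | ∀ j, ⟪a j, y'⟫ ≤ w i j}
      with hSupdef
    have hbdd : BddAbove (Set.range fun i : Fin k =>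
        infDist y {y' : EuclideanSpace ℝ (Fin q) | ∀ j, ⟪a j, y'⟫ ≤ w i j}) :=
      Set.Finite.bddAbove (Set.finite_range _)
    have hSup0 : 0 ≤ Sup := le_trans infDist_nonneg (le_ciSup hbdd hk.some)
    have hres : ∀ j, max (⟪a j, y⟫ - w' j) 0 ≤ ‖a j‖ * Sup := by
      intro j
      obtain ⟨i0, -, hi0⟩ := Finset.exists_mem_eq_inf' (Finset.univ_nonempty (α := Fin k))
        (fun i => w i j)
      have hSi0 : infDist y {y' : EuclideanSpace ℝ (Fin q) | ∀ j, ⟪a j, y'⟫ ≤ w i0 j} ≤ Sup :=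
        le_ciSup hbdd i0
      obtain ⟨z0, hz0, hdz⟩ := (hFcl i0).exists_infDist_eq_dist (hFne i0) y
      apply max_le
      · have h3 : ⟪a j, y⟫ - w' j ≤ ⟪a j, y⟫ - ⟪a j, z0⟫ := by
          have := hz0 j
          rw [hw'def]
          simp only [hi0]
          linarith
        have h4 : ⟪a j, y⟫ - ⟪a j, z0⟫ = ⟪a j, y - z0⟫ := (inner_sub_right _ _ _).symm
        have h5 : ⟪a j, y - z0⟫ ≤ ‖a j‖ * ‖y - z0‖ := real_inner_le_norm _ _
        have h7 : ‖a j‖ * dist y z0 ≤ ‖a j‖ * Sup := by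
          apply mul_le_mul_of_nonneg_left _ (norm_nonneg _)
          rw [← hdz]
          exact hSi0
        rw [dist_eq_norm] at h7
        linarith
      · exact mul_nonneg (norm_nonneg _) hSup0
    calc infDist y {y' : EuclideanSpace ℝ (Fin q) | ∀ j, ⟪a j, y'⟫ ≤ w' j}
        ≤ C * ∑ j, max (⟪a j, y⟫ - w' j) 0 := hmain
      _ ≤ C * ∑ j, ‖a j‖ * Sup := by
          apply mul_le_mul_of_nonneg_left _ hC.le
          exact Finset.sum_le_sum fun j _ => hres j
      _ = C * (∑ j, ‖a j‖) * Sup := by rw [← Finset.sum_mul, mul_assoc]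
      _ ≤ (C * (∑ j, ‖a j‖) + 1) * Sup := by nlinarith
end
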